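/- arXiv:2509.01568 — 8 statements merged into one kernel-verified Lean document; each statement's English description precedes it below -/
import Mathlib

section
/- There exist absolute constants c₁, c₂ > 0 such that for all natural numbers n, m with n ≥ 8m², there is a finite convex set A ⊂ ℝ with c₁·n ≤ |A| ≤ c₂·n which contains at least n/(4m) pairwise disjoint arithmetic progressions, each of length m and with nonzero common difference. -/
/-- A finite set `A ⊆ ℝ` is *convex* if, listing its elements in increasing order,
the consecutive differences form a strictly increasing sequence. -/
def IsConvexSet (A : Finset ℝ) : Prop :=
  ∀ i : ℕ, i + 2 < A.card →
    (A.sort (· ≤ ·)).getD (i + 1) 0 - (A.sort (· ≤ ·)).getD i 0 <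
      (A.sort (· ≤ ·)).getD (i + 2) 0 - (A.sort (· ≤ ·)).getD (i + 1) 0

/-- `P` is an arithmetic progression of length `m` with nonzero common difference. -/
def IsAPOfLength (P : Finset ℝ) (m : ℕ) : Prop :=
  ∃ x d : ℝ, d ≠ 0 ∧ P = (Finset.range m).image fun i : ℕ => x + (i : ℝ) * d

/-!
The set is the union of `m` rounds. Round `t` contains the `K` points `X o + t (D + o)`, `o < K`,
with `X o = m o + o² / (4K)` and `D = 3mK + 8m²`, so for each `o` the points with that `o` form an
arithmetic progression of length `m`. Inside round `t` the gaps between these points are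
`m + t + (2o + 1) / (4K) ∈ (m + t, m + t + 1/2)`; the remaining stretch up to the first point of
the next round is much longer than `m²`, so it can be cut by a strictly increasing run of gaps in
`(m + t + 1/2, m + t + 1)`. Hence all gaps increase, and every round has `O(K + m)` points.
-/

open List

theorem isConvexSet_toFinset {l : List ℝ} (hl : l.Pairwise (· < ·))
    (hgaps : ∀ i (h : i + 2 < l.length), l[i + 1] - l[i] < l[i + 2] - l[i + 1]) :
    IsConvexSet l.toFinset := by
  intro i hi
  rw [toFinset_card_of_nodup hl.nodup] at hi
  rw [(toFinset_sort _ hl.nodup).2 (hl.imp le_of_lt), getD_eq_getElem _ _ (by omega),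
    getD_eq_getElem _ _ (by omega), getD_eq_getElem _ _ (by omega)]
  exact hgaps i hi

theorem exists_isConvexSet_card (N : ℕ) : ∃ A : Finset ℝ, IsConvexSet A ∧ A.card = N := by
  have hl : ((range N).map fun i : ℕ => (i : ℝ) ^ 2).Pairwise (· < ·) :=
    pairwise_map.2 <| pairwise_lt_range.imp fun h => by gcongr
  refine ⟨_, isConvexSet_toFinset hl fun i h => ?_,
    by simp [toFinset_card_of_nodup hl.nodup]⟩
  simp only [getElem_map, getElem_range]
  push_cast
  nlinarith

section scanl

variable {Δ : List ℝ}

theorem pairwise_scanl_add (hpos : ∀ x ∈ Δ, 0 < x) (b : ℝ) :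
    (Δ.scanl (· + ·) b).Pairwise (· < ·) := by
  refine isChain_iff_pairwise.1 <| isChain_iff_getElem.2 fun i h => ?_
  rw [getElem_succ_scanl]
  exact lt_add_of_pos_right _ (hpos _ (getElem_mem _))

theorem isConvexSet_toFinset_scanl (hpos : ∀ x ∈ Δ, 0 < x) (hΔ : Δ.Pairwise (· < ·))
    (b : ℝ) : IsConvexSet (Δ.scanl (· + ·) b).toFinset := by
  refine isConvexSet_toFinset (pairwise_scanl_add hpos b) fun i h => ?_
  simp only [getElem_succ_scanl, add_sub_cancel_left]
  exact pairwise_iff_getElem.1 hΔ _ _ _ _ (Nat.lt_succ_self i)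

theorem card_toFinset_scanl_add (hpos : ∀ x ∈ Δ, 0 < x) (b : ℝ) :
    (Δ.scanl (· + ·) b).toFinset.card = Δ.length + 1 := by
  rw [toFinset_card_of_nodup (pairwise_scanl_add hpos b).nodup, length_scanl]

theorem add_sum_mem_scanl_add {p : List ℝ} (hp : p <+: Δ) (b : ℝ) :
    b + p.sum ∈ Δ.scanl (· + ·) b := by
  obtain ⟨q, rfl⟩ := hp
  rw [scanl_append]
  refine mem_append_left _ ?_
  have := getElem_scanl (f := (· + ·)) (a := b) (l := p) (i := p.length) (by simp)
  rw [take_length, foldl_eq_apply_foldr] at this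
  exact this ▸ getElem_mem _

end scanl

section rounds

variable {m : ℕ} {f : ℕ → List ℝ}

theorem pairwise_flatMap_range {c : ℝ} (hf : ∀ t < m, (f t).Pairwise (· < ·))
    (hf_mem : ∀ t < m, ∀ x ∈ f t, x ∈ Set.Ioo (c + t) (c + t + 1)) :
    ((range m).flatMap f).Pairwise (· < ·) := by
  refine pairwise_flatMap.2 ⟨fun t ht => hf t (mem_range.1 ht), ?_⟩
  refine pairwise_lt_range.imp_of_mem fun {t t'} ht ht' htt' x hx y hy => ?_
  have hx := hf_mem t (mem_range.1 ht) x hx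
  have hy := hf_mem t' (mem_range.1 ht') y hy
  have : (t : ℝ) + 1 ≤ t' := by exact_mod_cast htt'
  linarith [hx.2, hy.1]

theorem sum_flatMap_range {D : ℝ} (hf : ∀ t < m, (f t).sum = D) :
    ((range m).flatMap f).sum = m * D := by
  induction m with
  | zero => simp
  | succ m ih =>
    rw [range_succ, flatMap_append, sum_append, flatMap_singleton, hf m (by omega),
      ih fun t ht => hf t (by omega)]
    push_cast
    ring

theorem add_sum_mem_scanl_flatMap_range {D : ℝ} (hf : ∀ t < m, (f t).sum = D) {t : ℕ}
    (ht : t < m) {p : List ℝ} (hp : p <+: f t) :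
    t * D + p.sum ∈ ((range m).flatMap f).scanl (· + ·) 0 := by
  have hprefix : (range t).flatMap f ++ p <+: (range m).flatMap f := by
    obtain ⟨k, rfl⟩ := Nat.exists_eq_add_of_le ht
    rw [range_add, flatMap_append, range_succ, flatMap_append, flatMap_singleton]
    exact ((prefix_append_right_inj _).2 hp).trans (prefix_append _ _)
  have := add_sum_mem_scanl_add hprefix 0
  rwa [zero_add, sum_append, sum_flatMap_range fun t' ht' => hf t' (ht'.trans ht)] at this

theorem mul_le_length_flatMap_range {k : ℕ} (hf : ∀ t < m, k ≤ (f t).length) :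
    m * k ≤ ((range m).flatMap f).length := by
  rw [length_flatMap]
  simpa using card_nsmul_le_sum ((range m).map fun t => (f t).length) k (by simpa using hf)

theorem length_flatMap_range_le_mul {k : ℕ} (hf : ∀ t < m, (f t).length ≤ k) :
    ((range m).flatMap f).length ≤ m * k := by
  rw [length_flatMap]
  simpa using sum_le_card_nsmul ((range m).map fun t => (f t).length) k (by simpa using hf)

end rounds

theorem sum_map_range_odd (c : ℕ) :
    ((range c).map fun r : ℕ => 2 * (r : ℝ) + 1).sum = c ^ 2 := by
  induction c with
  | zero => simp
  | succ c ih => rw [sum_range_succ, ih]; push_cast; ring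

theorem exists_pairwise_lt_sum_eq {a b G : ℝ} (ha : 0 < a) (hab : a < b)
    (hG : a * b < G * (b - a)) :
    ∃ l : List ℝ, l.Pairwise (· < ·) ∧ (∀ x ∈ l, x ∈ Set.Ioo a b) ∧ l.sum = G := by
  have hb : 0 < b := ha.trans hab
  have hG0 : 0 < G := by nlinarith
  -- `hG` says `G / a - G / b > 1`, so some integer `c` lies strictly between them
  set c := ⌊G / b⌋₊ + 1
  have hc_lo : G / b < c := by simpa [c] using Nat.lt_floor_add_one (G / b)
  have hc_hi : (c : ℝ) < G / a := by
    have : G / b + 1 < G / a := by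
      rw [div_add_one hb.ne', div_lt_div_iff₀ hb ha]; nlinarith
    have := Nat.floor_le (div_pos hG0 hb).le
    simp only [c]; push_cast; linarith
  have hc : (0 : ℝ) < c := by positivity
  set σ := G / c
  have hσa : a < σ := by rw [lt_div_iff₀ hc]; rw [lt_div_iff₀ ha] at hc_hi; linarith
  have hσb : σ < b := by rw [div_lt_iff₀ hc]; rw [div_lt_iff₀ hb] at hc_lo; linarith
  set μ := min (σ - a) (b - σ) / c
  have hμ : 0 < μ := div_pos (lt_min (by linarith) (by linarith)) hc
  -- perturbing the constant list `σ` by `μ (2r + 1 - c)` keeps it inside `(a, b)` and its sum `G`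
  refine ⟨(range c).map fun r : ℕ => σ + μ * (2 * r + 1 - c), ?_, ?_, ?_⟩
  · exact pairwise_map.2 <| pairwise_lt_range.imp fun h => by gcongr
  · simp only [mem_map, mem_range]
    rintro _ ⟨r, hr, rfl⟩
    have hr' : (r : ℝ) + 1 ≤ c := by exact_mod_cast hr
    have hμc : μ * c = min (σ - a) (b - σ) := div_mul_cancel₀ _ hc.ne'
    have := min_le_left (σ - a) (b - σ)
    have := min_le_right (σ - a) (b - σ)
    constructor <;> nlinarith [(Nat.cast_nonneg r : (0 : ℝ) ≤ r)]
  · have : ((range c).map fun r : ℕ => σ + μ * (2 * r + 1 - c)) =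
        (range c).map fun r : ℕ => (σ - μ * c) + μ * (2 * r + 1) := by
      congr; funext r; ring
    rw [this, sum_map_add, sum_map_mul_left, sum_map_range_odd]
    simp only [map_const', length_range, sum_replicate, nsmul_eq_mul]
    linear_combination mul_div_cancel₀ G hc.ne'

namespace ConvexAPConstruction

variable (m K : ℕ)

noncomputable def firstTerm (o : ℕ) : ℝ := m * o + o ^ 2 / (4 * K)

noncomputable def span : ℝ := 3 * m * K + 8 * m ^ 2

noncomputable def point (t o : ℕ) : ℝ := firstTerm m K o + t * (span m K + o)

noncomputable def ap (o : ℕ) : Finset ℝ := (Finset.range m).image fun t => point m K t o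

noncomputable def gap (t o : ℕ) : ℝ := m + t + (2 * o + 1) / (4 * K)

noncomputable def blockGaps (t : ℕ) : List ℝ := (range (K - 1)).map (gap m K t)

noncomputable def fillerSum (t : ℕ) : ℝ := span m K - (blockGaps m K t).sum

variable {m K}

theorem isAPOfLength_ap (hm : 1 ≤ m) (o : ℕ) : IsAPOfLength (ap m K o) m := by
  refine ⟨firstTerm m K o, span m K + o, ?_, rfl⟩
  unfold span
  positivity

theorem mem_ap {o : ℕ} {x : ℝ} : x ∈ ap m K o ↔ ∃ t < m, point m K t o = x := by
  simp [ap]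

theorem sum_map_range_gap (t o : ℕ) :
    ((range o).map (gap m K t)).sum = firstTerm m K o + t * o := by
  induction o with
  | zero => simp [firstTerm]
  | succ o ih => rw [sum_range_succ, ih]; simp only [firstTerm, gap]; push_cast; ring

theorem sum_take_blockGaps (t : ℕ) {o : ℕ} (ho : o ≤ K - 1) :
    ((blockGaps m K t).take o).sum = firstTerm m K o + t * o := by
  rw [blockGaps, ← map_take, take_range, min_eq_left ho, sum_map_range_gap]

theorem firstTerm_add_mul_le {t o : ℕ} (ht : t < m) (ho : o < K) :
    firstTerm m K o + t * o ≤ 2 * m * K := by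
  have ht' : (t : ℝ) + 1 ≤ m := by exact_mod_cast ht
  have ho' : (o : ℝ) + 1 ≤ K := by exact_mod_cast ho
  have hsq : (o : ℝ) ^ 2 / (4 * K) ≤ K / 4 := by
    rw [div_le_iff₀ (by linarith)]; nlinarith
  unfold firstTerm
  nlinarith

theorem point_lt_point_of_lt_left {t t' o o' : ℕ} (ht : t < t') (ht' : t' < m) (ho : o < K) :
    point m K t o < point m K t' o' := by
  have hm : (1 : ℝ) ≤ m := by exact_mod_cast (t.zero_le.trans_lt (ht.trans ht'))
  have hoffset := firstTerm_add_mul_le (ht.trans ht') ho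
  have hspan : 2 * m * K < span m K := by
    unfold span; nlinarith [(K.cast_nonneg : (0 : ℝ) ≤ K)]
  have : 0 ≤ firstTerm m K o' + t' * o' := by unfold firstTerm; positivity
  calc point m K t o = t * span m K + (firstTerm m K o + t * o) := by unfold point; ring
    _ < (t + 1) * span m K := by linarith
    _ ≤ t' * span m K :=
      mul_le_mul_of_nonneg_right (by exact_mod_cast ht) (by unfold span; positivity)
    _ ≤ point m K t' o' := by unfold point; linarith

theorem point_lt_point_of_lt_right (hm : 1 ≤ m) (t : ℕ) {o o' : ℕ} (ho : o < o') :
    point m K t o < point m K t o' := by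
  have hfirst : firstTerm m K o < firstTerm m K o' := by
    unfold firstTerm
    exact add_lt_add_of_lt_of_le
      (mul_lt_mul_of_pos_left (by exact_mod_cast ho) (by exact_mod_cast hm)) (by gcongr)
  have : (t : ℝ) * o ≤ t * o' := by gcongr
  simp only [point, mul_add]
  linarith

theorem eq_of_point_eq {t t' o o' : ℕ} (ht : t < m) (ht' : t' < m) (ho : o < K) (ho' : o' < K)
    (h : point m K t o = point m K t' o') : t = t' ∧ o = o' := by
  have hm : 1 ≤ m := by omega
  rcases lt_trichotomy t t' with htt | rfl | htt
  · exact absurd h (point_lt_point_of_lt_left htt ht' ho).ne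
  · rcases lt_trichotomy o o' with hoo | rfl | hoo
    · exact absurd h (point_lt_point_of_lt_right hm t hoo).ne
    · exact ⟨rfl, rfl⟩
    · exact absurd h (point_lt_point_of_lt_right hm t hoo).ne'
  · exact absurd h (point_lt_point_of_lt_left htt ht ho').ne'

theorem gap_mem_Ioo (t : ℕ) {o : ℕ} (ho : o + 1 < K) :
    gap m K t o ∈ Set.Ioo ((m : ℝ) + t) (m + t + 1 / 2) := by
  have ho' : (o : ℝ) + 1 + 1 ≤ K := by exact_mod_cast ho
  have hpos : (0 : ℝ) < (2 * o + 1) / (4 * K) := by apply div_pos <;> linarith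
  have hlt : (2 * o + 1 : ℝ) / (4 * K) < 1 / 2 := by rw [div_lt_iff₀ (by linarith)]; linarith
  unfold gap
  constructor <;> linarith

theorem mem_blockGaps_Ioo {t : ℕ} {x : ℝ} (hx : x ∈ blockGaps m K t) :
    x ∈ Set.Ioo ((m : ℝ) + t) (m + t + 1 / 2) := by
  obtain ⟨o, ho, rfl⟩ := mem_map.1 hx
  exact gap_mem_Ioo t (by rw [mem_range] at ho; omega)

theorem pairwise_blockGaps (hK : 1 ≤ K) (t : ℕ) : (blockGaps m K t).Pairwise (· < ·) := by
  refine pairwise_map.2 <| pairwise_lt_range.imp fun h => ?_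
  unfold gap
  gcongr

theorem fillerSum_eq (t : ℕ) :
    fillerSum m K t = span m K - (firstTerm m K (K - 1) + t * (K - 1 : ℕ)) := by
  rw [fillerSum, blockGaps, sum_map_range_gap]

theorem fillerSum_le (t : ℕ) : fillerSum m K t ≤ span m K := by
  have : 0 ≤ firstTerm m K (K - 1) := by unfold firstTerm; positivity
  rw [fillerSum_eq]
  have : (0 : ℝ) ≤ t * (K - 1 : ℕ) := by positivity
  linarith

theorem mul_lt_fillerSum (hK : 1 ≤ K) {t : ℕ} (ht : t < m) :
    (2 * m + 2 * t + 1 : ℝ) * (m + t + 1) < fillerSum m K t := by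
  have hoffset := firstTerm_add_mul_le ht (Nat.sub_lt hK one_pos)
  have ht' : (t : ℝ) + 1 ≤ m := by exact_mod_cast ht
  rw [fillerSum_eq, span]
  nlinarith

theorem exists_round (hK : 1 ≤ K) {t : ℕ} (ht : t < m) :
    ∃ r : List ℝ, blockGaps m K t <+: r ∧ r.Pairwise (· < ·) ∧
      (∀ x ∈ r, x ∈ Set.Ioo ((m : ℝ) + t) (m + t + 1)) ∧ r.sum = span m K ∧
      K ≤ r.length ∧ r.length ≤ 4 * K + 8 * m := by
  have hG := mul_lt_fillerSum hK ht
  obtain ⟨l, hl, hl_mem, hl_sum⟩ :=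
    exists_pairwise_lt_sum_eq (a := m + t + 1 / 2) (b := m + t + 1) (G := fillerSum m K t)
      (by positivity) (by linarith) (by linarith)
  have hl_ne : l ≠ [] := by
    rintro rfl
    rw [sum_nil] at hl_sum
    nlinarith
  have hl_length : (l.length : ℝ) * m ≤ (3 * K + 8 * m) * m :=
    calc (l.length : ℝ) * m ≤ l.length • (m + t + 1 / 2 : ℝ) := by
          rw [nsmul_eq_mul]; gcongr; linarith [(t.cast_nonneg : (0 : ℝ) ≤ t)]
      _ ≤ l.sum := card_nsmul_le_sum l _ fun x hx => (hl_mem x hx).1.le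
      _ ≤ span m K := hl_sum ▸ fillerSum_le t
      _ = (3 * K + 8 * m) * m := by unfold span; ring
  have hm : (0 : ℝ) < m := by exact_mod_cast t.zero_le.trans_lt ht
  have hl_length' : l.length ≤ 3 * K + 8 * m := by
    exact_mod_cast le_of_mul_le_mul_right hl_length hm
  refine ⟨blockGaps m K t ++ l, prefix_append _ _, ?_, ?_, ?_, ?_, ?_⟩
  · exact pairwise_append.2 ⟨pairwise_blockGaps hK t, hl,
      fun x hx y hy => (mem_blockGaps_Ioo hx).2.trans (hl_mem y hy).1⟩
  · rintro x hx
    rcases mem_append.1 hx with hx | hx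
    · exact ⟨(mem_blockGaps_Ioo hx).1, by linarith [(mem_blockGaps_Ioo hx).2]⟩
    · exact ⟨by linarith [(hl_mem x hx).1], (hl_mem x hx).2⟩
  · rw [sum_append, hl_sum, fillerSum]
    ring
  · have := length_pos_iff.2 hl_ne
    simp only [length_append, blockGaps, length_map, length_range]
    omega
  · simp only [length_append, blockGaps, length_map, length_range]
    omega

end ConvexAPConstruction

open ConvexAPConstruction in
theorem exists_isConvexSet_disjoint_aps {m K : ℕ} (hm : 1 ≤ m) (hK : 1 ≤ K) :
    ∃ A : Finset ℝ, IsConvexSet A ∧ m * K ≤ A.card ∧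
      A.card ≤ m * (4 * K + 8 * m) + 1 ∧
      ∃ Ps : Finset (Finset ℝ), Ps.card = K ∧ (∀ P ∈ Ps, P ⊆ A ∧ IsAPOfLength P m) ∧
        ∀ P ∈ Ps, ∀ Q ∈ Ps, P ≠ Q → Disjoint P Q := by
  choose! round hprefix hpair hmem hsum hlen_lo hlen_hi using
    fun t (ht : t < m) => exists_round (m := m) hK ht
  set Δ := (range m).flatMap round
  have hpos : ∀ x ∈ Δ, 0 < x := by
    simp only [Δ, mem_flatMap, mem_range]
    rintro x ⟨t, ht, hx⟩
    exact lt_of_le_of_lt (by positivity) (hmem t ht x hx).1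
  have hpoint : ∀ t < m, ∀ o < K, point m K t o ∈ Δ.scanl (· + ·) 0 := by
    intro t ht o ho
    convert add_sum_mem_scanl_flatMap_range hsum ht
      ((take_prefix o _).trans (hprefix t ht)) using 1
    rw [sum_take_blockGaps t (by omega), point]
    ring
  have hcard := card_toFinset_scanl_add hpos 0
  refine ⟨_, isConvexSet_toFinset_scanl hpos (pairwise_flatMap_range hpair hmem) 0, ?_, ?_,
    (Finset.range K).image (ap m K), ?_, ?_, ?_⟩
  · exact hcard ▸ (mul_le_length_flatMap_range hlen_lo).trans (Nat.le_succ _)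
  · exact hcard ▸ Nat.add_le_add_right (length_flatMap_range_le_mul hlen_hi) 1
  · rw [Finset.card_image_of_injOn, Finset.card_range]
    intro o ho o' ho' h
    have : point m K 0 o ∈ ap m K o' := h ▸ mem_ap.2 ⟨0, hm, rfl⟩
    obtain ⟨t', ht', heq⟩ := mem_ap.1 this
    exact (eq_of_point_eq ht' hm (Finset.mem_range.1 ho') (Finset.mem_range.1 ho) heq).2.symm
  · simp only [Finset.mem_image, Finset.mem_range]
    rintro _ ⟨o, ho, rfl⟩
    refine ⟨fun x hx => ?_, isAPOfLength_ap hm o⟩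
    obtain ⟨t, ht, rfl⟩ := mem_ap.1 hx
    exact mem_toFinset.2 (hpoint t ht o ho)
  · simp only [Finset.mem_image, Finset.mem_range]
    rintro _ ⟨o, ho, rfl⟩ _ ⟨o', ho', rfl⟩ hne
    refine Finset.disjoint_left.2 fun x hx hx' => hne ?_
    obtain ⟨t, ht, rfl⟩ := mem_ap.1 hx
    obtain ⟨t', ht', heq⟩ := mem_ap.1 hx'
    rw [(eq_of_point_eq ht' ht ho' ho heq).2]

/-- For all `n ≥ 8m²` there is a convex set `A` of size `Θ(n)` containing at least
`n/(4m)` pairwise disjoint arithmetic progressions, each of length `m`. -/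
theorem convex_set_with_disjoint_APs :
    ∃ c₁ c₂ : ℝ, 0 < c₁ ∧ 0 < c₂ ∧ ∀ n m : ℕ, 8 * m ^ 2 ≤ n →
      ∃ A : Finset ℝ, IsConvexSet A ∧
        c₁ * (n : ℝ) ≤ (A.card : ℝ) ∧ (A.card : ℝ) ≤ c₂ * (n : ℝ) ∧
        ∃ Ps : Finset (Finset ℝ),
          (n : ℝ) / (4 * (m : ℝ)) ≤ (Ps.card : ℝ) ∧
          (∀ P ∈ Ps, P ⊆ A ∧ IsAPOfLength P m) ∧
          (∀ P ∈ Ps, ∀ Q ∈ Ps, P ≠ Q → Disjoint P Q) := by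
  refine ⟨1 / 4, 3, by norm_num, by norm_num, fun n m hnm => ?_⟩
  rcases Nat.eq_zero_or_pos m with rfl | hm
  · obtain ⟨A, hA, hcard⟩ := exists_isConvexSet_card n
    refine ⟨A, hA, ?_, ?_, ∅, by simp, by simp, by simp⟩ <;> rw [hcard] <;>
      linarith [n.cast_nonneg (α := ℝ)]
  have hm' : (1 : ℝ) ≤ m := by exact_mod_cast hm
  have hnm' : 8 * (m : ℝ) ^ 2 ≤ n := by exact_mod_cast hnm
  have hn : (0 : ℝ) < (n : ℝ) / (4 * (m : ℝ)) := by apply div_pos <;> nlinarith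
  set K := ⌈(n : ℝ) / (4 * m)⌉₊
  have hK_ge : (n : ℝ) / (4 * m) ≤ K := Nat.le_ceil _
  have hK_lt : (K : ℝ) < n / (4 * m) + 1 := Nat.ceil_lt_add_one hn.le
  obtain ⟨A, hA, hlo, hhi, Ps, hPs, hPA, hdisj⟩ :=
    exists_isConvexSet_disjoint_aps (K := K) hm (Nat.one_le_ceil_iff.2 hn)
  have hlo' : (m : ℝ) * K ≤ A.card := by exact_mod_cast hlo
  have hhi' : (A.card : ℝ) ≤ m * (4 * K + 8 * m) + 1 := by exact_mod_cast hhi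
  rw [div_le_iff₀ (by positivity)] at hK_ge
  rw [← sub_lt_iff_lt_add, lt_div_iff₀ (by positivity)] at hK_lt
  refine ⟨A, hA, by linarith, by nlinarith, Ps, ?_, hPA, hdisj⟩
  rw [hPs, div_le_iff₀ (by positivity)]
  linarith
end

section
/- There exists an absolute constant c > 0 such that for every natural number N there is a finite convex set A ⊂ ℝ with |A| ≥ N which contains at least c·|A|^{1/2} pairwise disjoint arithmetic progressions, each of length at least c·|A|^{1/2} and with nonzero common difference. -/
/-!
The set is the set of partial sums of a strictly increasing sequence of gaps, arranged in `k`
blocks, the gaps of block `t` lying in `[k + t, k + t + 1)`. Block `t` starts with the `k - 1` gaps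
`t + k + j / (2k)`, `j < k - 1`, and is completed by filler gaps in `(k + t + 1/2, k + t + 1)` so
that every block has total length `10k²`. Then the `j`-th point of block `t` is
`apStart j + t * (10k² + j)`, so for each `j < k` these points form an arithmetic progression of
length `k`. A filler sums to at most `10k²` with gaps larger than `k`, so a block has `O(k)` gaps
and the set has `O(k²)` elements.
-/

theorem isChain_lt_scanl_add {M : Type*} [AddMonoid M] [Preorder M] [AddLeftStrictMono M]
    {γ : List M} (hpos : ∀ g ∈ γ, 0 < g) (x : M) : (γ.scanl (· + ·) x).IsChain (· < ·) := by
  refine List.isChain_iff_getElem.mpr fun i hi => ?_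
  rw [List.getElem_succ_scanl]
  exact lt_add_of_pos_right _ (hpos _ (List.getElem_mem (by simpa using hi)))

theorem isConvexSet_toFinset_scanl_add {γ : List ℝ} (hpos : ∀ g ∈ γ, 0 < g)
    (hγ : γ.Pairwise (· < ·)) (x : ℝ) : IsConvexSet (γ.scanl (· + ·) x).toFinset := by
  have hS := List.isChain_iff_pairwise.mp (isChain_lt_scanl_add hpos x)
  intro i hi
  rw [List.toFinset_card_of_nodup hS.nodup, List.length_scanl] at hi
  rw [(List.toFinset_sort _ hS.nodup).mpr (hS.imp le_of_lt),
    List.getD_eq_getElem (n := i) _ _ (by simp; omega),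
    List.getD_eq_getElem (n := i + 1) _ _ (by simp; omega),
    List.getD_eq_getElem (n := i + 2) _ _ (by simp; omega)]
  simp only [List.getElem_succ_scanl, add_sub_cancel_left]
  exact List.pairwise_iff_getElem.mp hγ i (i + 1) _ _ (lt_add_one i)

theorem add_sum_mem_scanl_add_s2 {M : Type*} [AddMonoid M] {l₁ l : List M} (h : l₁ <+: l) (x : M) :
    x + l₁.sum ∈ l.scanl (· + ·) x := by
  obtain ⟨l₂, rfl⟩ := h
  induction l₁ generalizing x with
  | nil => cases l₂ <;> simp [List.scanl_cons]
  | cons g l₁ ih =>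
    rw [List.cons_append, List.scanl_cons, List.sum_cons, ← add_assoc]
    exact List.mem_cons_of_mem _ (ih _)

theorem pairwise_lt_flatMap_range {β : ℕ → List ℝ} {a : ℝ} {n : ℕ}
    (hβ : ∀ t < n, (β t).Pairwise (· < ·))
    (hmem : ∀ t < n, ∀ g ∈ β t, a + t ≤ g ∧ g < a + t + 1) :
    ((List.range n).flatMap β).Pairwise (· < ·) := by
  refine List.pairwise_flatMap.mpr ⟨fun t ht => hβ t (List.mem_range.mp ht), ?_⟩
  refine List.pairwise_lt_range.imp_of_mem fun {s t} hs ht hst g hg g' hg' => ?_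
  have hs' := (hmem s (List.mem_range.mp hs) g hg).2
  have ht' := (hmem t (List.mem_range.mp ht) g' hg').1
  have : (s : ℝ) + 1 ≤ t := by exact_mod_cast hst
  linarith

theorem exists_nat_mul_lt_and_lt_mul {L U G : ℝ} (hL : 0 < L) (hLU : L < U)
    (hG : L * U < G * (U - L)) : ∃ m : ℕ, 0 < m ∧ m * L < G ∧ G < m * U := by
  have hU : 0 < U := hL.trans hLU
  have hGU : 0 ≤ G / U := div_nonneg (by nlinarith) hU.le
  refine ⟨⌊G / U⌋₊ + 1, Nat.succ_pos _, ?_, ?_⟩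
  · calc ((⌊G / U⌋₊ + 1 : ℕ) : ℝ) * L ≤ (G / U + 1) * L := by
          push_cast; gcongr; exact Nat.floor_le hGU
      _ < G := by
          rw [div_add_one hU.ne', div_mul_eq_mul_div, div_lt_iff₀ hU]; nlinarith
  · have := Nat.lt_floor_add_one (G / U)
    rw [div_lt_iff₀ hU] at this
    exact_mod_cast this

theorem sum_map_natCast_range (m : ℕ) :
    ((List.range m).map fun i : ℕ => (i : ℝ)).sum = m * (m - 1) / 2 := by
  induction m with
  | zero => simp
  | succ m ih => rw [List.sum_range_succ, ih]; push_cast; ring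

theorem exists_pairwise_lt_sum_eq_of_mul_lt {L U G : ℝ} {m : ℕ} (hm : 0 < m) (hL : m * L < G)
    (hU : G < m * U) :
    ∃ γ : List ℝ, γ.Pairwise (· < ·) ∧ (∀ g ∈ γ, L < g ∧ g < U) ∧ γ.sum = G := by
  have hm' : (0 : ℝ) < m := by exact_mod_cast hm
  set c := G / m
  have hLc : L < c := by rw [lt_div_iff₀ hm']; linarith
  have hcU : c < U := by rw [div_lt_iff₀ hm']; linarith
  set δ := min (c - L) (U - c)
  have hδ : 0 < δ := lt_min (by linarith) (by linarith)
  set ε := δ / m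
  have hε : 0 < ε := div_pos hδ hm'
  have hmε : m * ε = δ := mul_div_cancel₀ δ hm'.ne'
  refine ⟨(List.range m).map fun i : ℕ => c - (m - 1) / 2 * ε + i * ε, ?_, ?_, ?_⟩
  · refine List.pairwise_lt_range.map _ fun i j hij => ?_
    have : (i : ℝ) < j := by exact_mod_cast hij
    nlinarith
  · simp only [List.mem_map, List.mem_range]
    rintro _ ⟨i, hi, rfl⟩
    have hi' : (i : ℝ) + 1 ≤ m := by exact_mod_cast hi
    have h1 : -(m : ℝ) * ε < ((i : ℝ) - (m - 1) / 2) * ε :=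
      mul_lt_mul_of_pos_right (by linarith [(Nat.cast_nonneg i : (0 : ℝ) ≤ i)]) hε
    have h2 : ((i : ℝ) - (m - 1) / 2) * ε < m * ε := mul_lt_mul_of_pos_right (by linarith) hε
    have := min_le_left (c - L) (U - c)
    have := min_le_right (c - L) (U - c)
    constructor <;> linarith
  · simp only [List.sum_map_add, List.sum_map_mul_right, sum_map_natCast_range, List.map_const',
      List.sum_replicate, List.length_range, nsmul_eq_mul]
    simp only [c]
    field_simp
    ring

theorem exists_pairwise_lt_sum_eq_s2 {L U G : ℝ} (hL : 0 < L) (hLU : L < U)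
    (hG : L * U < G * (U - L)) :
    ∃ γ : List ℝ, γ.Pairwise (· < ·) ∧ (∀ g ∈ γ, L < g ∧ g < U) ∧ γ.sum = G := by
  obtain ⟨m, hm, hmL, hmU⟩ := exists_nat_mul_lt_and_lt_mul hL hLU hG
  exact exists_pairwise_lt_sum_eq_of_mul_lt hm hmL hmU

theorem eq_of_nat_mul_add_eq {D r s : ℝ} {t t' : ℕ} (hr : 0 ≤ r) (hrD : r < D) (hs : 0 ≤ s)
    (hsD : s < D) (h : t * D + r = t' * D + s) : t = t' := by
  by_contra hne
  rcases Nat.lt_or_gt_of_ne hne with hlt | hlt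
  · have : (t : ℝ) + 1 ≤ t' := by exact_mod_cast hlt
    nlinarith
  · have : (t' : ℝ) + 1 ≤ t := by exact_mod_cast hlt
    nlinarith

noncomputable section

namespace ConvexAP

variable (k : ℕ)

def baseGap (j : ℕ) : ℝ := k + j / (2 * k)

def apStart (j : ℕ) : ℝ := ((List.range j).map (baseGap k)).sum

def apDiff (j : ℕ) : ℝ := 10 * k ^ 2 + j

def point (t j : ℕ) : ℝ := apStart k j + t * apDiff k j

def ap (j : ℕ) : Finset ℝ := (Finset.range k).image fun t => point k t j

def headGaps (t : ℕ) : List ℝ := (List.range (k - 1)).map fun j => t + baseGap k j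

def IsFiller (F : ℕ → List ℝ) : Prop :=
  ∀ t < k, (F t).Pairwise (· < ·) ∧ (∀ g ∈ F t, k + t + 1 / 2 < g ∧ g < k + t + 1) ∧
    (F t).sum = apDiff k 0 - (headGaps k t).sum

def gaps (F : ℕ → List ℝ) : List ℝ := (List.range k).flatMap fun t => headGaps k t ++ F t

variable {k}

theorem baseGap_pos (hk : 0 < k) (j : ℕ) : 0 < baseGap k j := by
  unfold baseGap; positivity

theorem baseGap_lt {j : ℕ} (hj : j < k) : baseGap k j < k + 1 / 2 := by
  have hk : (0 : ℝ) < k := by exact_mod_cast hj.pos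
  have : (j : ℝ) < k := by exact_mod_cast hj
  unfold baseGap
  rw [add_lt_add_iff_left, div_lt_iff₀ (by positivity)]
  linarith

theorem apStart_succ (j : ℕ) : apStart k (j + 1) = apStart k j + baseGap k j :=
  List.sum_range_succ _ _

theorem strictMono_apStart (hk : 0 < k) : StrictMono (apStart k) :=
  strictMono_nat_of_lt_succ fun j => by
    rw [apStart_succ]; linarith [baseGap_pos hk j]

theorem apStart_le {j : ℕ} (hj : j ≤ k) : apStart k j ≤ j * (k + 1 / 2) := by
  have := List.sum_le_card_nsmul ((List.range j).map (baseGap k)) (k + 1 / 2) <| by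
    simp only [List.mem_map, List.mem_range]
    rintro _ ⟨i, hi, rfl⟩
    exact (baseGap_lt (hi.trans_le hj)).le
  simpa [apStart, mul_add] using this

theorem mem_headGaps {t : ℕ} {g : ℝ} (hg : g ∈ headGaps k t) :
    k + t ≤ g ∧ g < k + t + 1 / 2 := by
  obtain ⟨j, hj, rfl⟩ := List.mem_map.mp hg
  have hj := List.mem_range.mp hj
  have := baseGap_lt (k := k) (j := j) (by omega)
  refine ⟨?_, by linarith⟩
  unfold baseGap
  have : (0 : ℝ) ≤ j / (2 * k) := by positivity
  linarith

theorem headGaps_pairwise (hk : 0 < k) (t : ℕ) : (headGaps k t).Pairwise (· < ·) := by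
  refine List.pairwise_lt_range.map _ fun i j hij => ?_
  have hij : (i : ℝ) < j := by exact_mod_cast hij
  have hk : (0 : ℝ) < k := by exact_mod_cast hk
  unfold baseGap
  gcongr

theorem headGaps_sum_nonneg (t : ℕ) : 0 ≤ (headGaps k t).sum :=
  List.sum_nonneg fun g hg => by
    linarith [(mem_headGaps hg).1, (Nat.cast_nonneg (k + t) : (0 : ℝ) ≤ _)]

theorem headGaps_sum_le {t : ℕ} (ht : t < k) : (headGaps k t).sum ≤ 2 * k ^ 2 := by
  have htk : (t : ℝ) + 1 ≤ k := by exact_mod_cast ht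
  have := List.sum_le_card_nsmul (headGaps k t) (2 * k) fun g hg => by
    linarith [(mem_headGaps hg).2]
  have hlen : ((headGaps k t).length : ℝ) ≤ k := by
    simp only [headGaps, List.length_map, List.length_range]; exact_mod_cast Nat.sub_le k 1
  rw [nsmul_eq_mul] at this
  nlinarith

theorem exists_isFiller : ∃ F, IsFiller k F := by
  have hfill : ∀ t, ∃ F : List ℝ, t < k → F.Pairwise (· < ·) ∧
      (∀ g ∈ F, k + t + 1 / 2 < g ∧ g < k + t + 1) ∧
      F.sum = apDiff k 0 - (headGaps k t).sum := by
    intro t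
    by_cases ht : t < k
    · have htk : (t : ℝ) + 1 ≤ k := by exact_mod_cast ht
      have hG : (k + t + 1 / 2 : ℝ) * (k + t + 1) <
          (apDiff k 0 - (headGaps k t).sum) * (k + t + 1 - (k + t + 1 / 2)) := by
        have := headGaps_sum_le ht
        simp only [apDiff]
        nlinarith
      obtain ⟨F, hF⟩ := exists_pairwise_lt_sum_eq_s2 (by positivity) (by linarith) hG
      exact ⟨F, fun _ => hF⟩
    · exact ⟨[], fun h => absurd h ht⟩
  choose F hF using hfill
  exact ⟨F, hF⟩

theorem apStart_nonneg (hk : 0 < k) (j : ℕ) : 0 ≤ apStart k j :=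
  List.sum_nonneg fun _ hg => by
    obtain ⟨i, -, rfl⟩ := List.mem_map.mp hg
    exact (baseGap_pos hk i).le

theorem eq_of_point_eq {t t' j j' : ℕ} (ht : t < k) (ht' : t' < k) (hj : j < k) (hj' : j' < k)
    (h : point k t j = point k t' j') : t = t' ∧ j = j' := by
  have hk := ht.pos
  -- `point k t j = t * 10k² + r` with `0 ≤ r < 10k²`: `t` is the quotient, then `r` determines `j`.
  have hrem : ∀ {t j : ℕ}, t < k → j < k →
      0 ≤ apStart k j + t * j ∧ apStart k j + t * j < 10 * k ^ 2 := by
    intro t j ht hj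
    have htk : (t : ℝ) + 1 ≤ k := by exact_mod_cast ht
    have hjk : (j : ℝ) + 1 ≤ k := by exact_mod_cast hj
    have := apStart_le hj.le
    have := apStart_nonneg hk j
    constructor
    · positivity
    · nlinarith [(Nat.cast_nonneg t : (0 : ℝ) ≤ t), (Nat.cast_nonneg j : (0 : ℝ) ≤ j)]
  have hpoint : ∀ t j, point k t j = t * (10 * k ^ 2) + (apStart k j + t * j) := by
    intro t j; simp only [point, apDiff]; ring
  rw [hpoint, hpoint] at h
  obtain rfl := eq_of_nat_mul_add_eq (hrem ht hj).1 (hrem ht hj).2 (hrem ht' hj').1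
    (hrem ht' hj').2 h
  have hmono : StrictMono fun j : ℕ => apStart k j + t * j :=
    (strictMono_apStart hk).add_monotone fun a b hab => by gcongr
  exact ⟨rfl, hmono.injective (by linarith)⟩

section Filler

variable {F : ℕ → List ℝ} (hF : IsFiller k F)
include hF

theorem mem_block {t : ℕ} (ht : t < k) {g : ℝ} (hg : g ∈ headGaps k t ++ F t) :
    k + t ≤ g ∧ g < k + t + 1 := by
  rcases List.mem_append.mp hg with hg | hg
  · have := mem_headGaps hg; constructor <;> linarith
  · have := (hF t ht).2.1 g hg; constructor <;> linarith

theorem block_sum {t : ℕ} (ht : t < k) : (headGaps k t ++ F t).sum = apDiff k 0 := by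
  rw [List.sum_append, (hF t ht).2.2]; ring

theorem gaps_pairwise (hk : 0 < k) : (gaps k F).Pairwise (· < ·) := by
  refine pairwise_lt_flatMap_range (a := k) (fun t ht => ?_) fun t ht g hg => mem_block hF ht hg
  refine List.pairwise_append.mpr ⟨headGaps_pairwise hk t, (hF t ht).1, fun a ha b hb => ?_⟩
  linarith [(mem_headGaps ha).2, ((hF t ht).2.1 b hb).1]

theorem gaps_pos (hk : 0 < k) : ∀ g ∈ gaps k F, 0 < g := by
  intro g hg
  obtain ⟨t, ht, hg⟩ := List.mem_flatMap.mp hg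
  have hk' : (0 : ℝ) < k := by exact_mod_cast hk
  linarith [(mem_block hF (List.mem_range.mp ht) hg).1, (Nat.cast_nonneg t : (0 : ℝ) ≤ t)]

theorem length_gaps_le : (gaps k F).length ≤ 11 * k ^ 2 := by
  have hblock : ∀ t < k, (headGaps k t ++ F t).length ≤ 11 * k := by
    intro t ht
    have hk : (0 : ℝ) < k := by exact_mod_cast ht.pos
    have := List.card_nsmul_le_sum (F t) k fun g hg => by
      linarith [((hF t ht).2.1 g hg).1, (Nat.cast_nonneg t : (0 : ℝ) ≤ t)]
    rw [nsmul_eq_mul, (hF t ht).2.2, apDiff, Nat.cast_zero, add_zero] at this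
    have hF10 : (F t).length ≤ 10 * k := by
      have : ((F t).length : ℝ) * k ≤ 10 * k * k := by
        nlinarith [headGaps_sum_nonneg (k := k) t]
      exact_mod_cast le_of_mul_le_mul_right this hk
    simp only [List.length_append, headGaps, List.length_map, List.length_range]
    omega
  rw [gaps, List.length_flatMap]
  refine (List.sum_le_card_nsmul _ (11 * k) ?_).trans_eq ?_
  · simp only [List.mem_map, List.mem_range]
    rintro _ ⟨t, ht, rfl⟩
    exact hblock t ht
  · simp only [List.length_map, List.length_range, smul_eq_mul]; ring

theorem point_mem_scanl {t j : ℕ} (ht : t < k) (hj : j < k) :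
    point k t j ∈ (gaps k F).scanl (· + ·) 0 := by
  set B := fun s => headGaps k s ++ F s
  have hprefix : (List.range t).flatMap B ++ (headGaps k t).take j <+: gaps k F := by
    have hrange : List.range (t + 1) <+: List.range k := by
      obtain ⟨n, hn⟩ := Nat.exists_eq_add_of_le ht
      rw [hn, List.range_add (n := t + 1)]
      exact List.prefix_append _ _
    have := hrange.flatMap B
    rw [List.range_succ, List.flatMap_append, List.flatMap_singleton] at this
    exact ((List.prefix_append_right_inj _).mpr ((List.take_prefix _ _).trans
      (List.prefix_append _ (F t)))).trans this
  have hblocks : ((List.range t).flatMap B).sum = t * apDiff k 0 := by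
    have hsum :
        (List.range t).map (fun s => (B s).sum) = (List.range t).map fun _ => apDiff k 0 :=
      List.map_congr_left fun s hs => block_sum hF ((List.mem_range.mp hs).trans ht)
    simp [List.flatMap, List.sum_flatten, Function.comp_def, hsum]
  have hhead : ((headGaps k t).take j).sum = j * t + apStart k j := by
    rw [headGaps, ← List.map_take, List.take_range, min_eq_left (by omega), List.sum_map_add]
    simp [apStart]
  have := add_sum_mem_scanl_add_s2 hprefix 0
  have hpoint : t * apDiff k 0 + (j * t + apStart k j) = point k t j := by
    simp only [point, apDiff]; push_cast; ring
  rwa [zero_add, List.sum_append, hblocks, hhead, hpoint] at this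

end Filler

theorem isAPOfLength_ap (hk : 0 < k) (j : ℕ) : IsAPOfLength (ap k j) k := by
  have hk : (0 : ℝ) < k := by exact_mod_cast hk
  exact ⟨apStart k j, apDiff k j, by unfold apDiff; positivity, rfl⟩

theorem card_ap {j : ℕ} (hj : j < k) : (ap k j).card = k := by
  rw [ap, Finset.card_image_of_injOn, Finset.card_range]
  intro t ht t' ht' h
  exact (eq_of_point_eq (Finset.mem_range.mp ht) (Finset.mem_range.mp ht') hj hj h).1

theorem disjoint_ap {j j' : ℕ} (hj : j < k) (hj' : j' < k) (hne : j ≠ j') :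
    Disjoint (ap k j) (ap k j') := by
  refine Finset.disjoint_left.mpr fun x hx hx' => hne ?_
  obtain ⟨t, ht, rfl⟩ := Finset.mem_image.mp hx
  obtain ⟨t', ht', h⟩ := Finset.mem_image.mp hx'
  exact (eq_of_point_eq (Finset.mem_range.mp ht') (Finset.mem_range.mp ht) hj' hj h).2.symm

theorem ap_subset {F : ℕ → List ℝ} (hF : IsFiller k F) {j : ℕ} (hj : j < k) :
    ap k j ⊆ ((gaps k F).scanl (· + ·) 0).toFinset := fun x hx => by
  obtain ⟨t, ht, rfl⟩ := Finset.mem_image.mp hx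
  exact List.mem_toFinset.mpr (point_mem_scanl hF (Finset.mem_range.mp ht) hj)

theorem exists_isConvexSet_pairwiseDisjoint_APs {k : ℕ} (hk : 0 < k) :
    ∃ A : Finset ℝ, IsConvexSet A ∧ k ≤ A.card ∧ A.card ≤ (4 * k) ^ 2 ∧
      ∃ Ps : Finset (Finset ℝ), Ps.card = k ∧ (∀ P ∈ Ps, P ⊆ A ∧ IsAPOfLength P k) ∧
        (Ps : Set (Finset ℝ)).Pairwise Disjoint := by
  obtain ⟨F, hF⟩ := exists_isFiller (k := k)
  refine ⟨_, isConvexSet_toFinset_scanl_add (gaps_pos hF hk) (gaps_pairwise hF hk) 0, ?_, ?_,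
    (Finset.range k).image (ap k), ?_, ?_, ?_⟩
  · exact (card_ap hk).symm.le.trans (Finset.card_le_card (ap_subset hF hk))
  · nlinarith [(List.toFinset_card_le ((gaps k F).scanl (· + ·) 0)).trans_eq List.length_scanl,
      length_gaps_le hF]
  · rw [Finset.card_image_of_injOn, Finset.card_range]
    intro j hj j' hj' h
    have hmem : point k 0 j ∈ ap k j' := h ▸ Finset.mem_image_of_mem _ (Finset.mem_range.mpr hk)
    obtain ⟨t, ht, he⟩ := Finset.mem_image.mp hmem
    exact (eq_of_point_eq (Finset.mem_range.mp ht) hk (Finset.mem_range.mp hj')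
      (Finset.mem_range.mp hj) he).2.symm
  · intro P hP
    obtain ⟨j, hj, rfl⟩ := Finset.mem_image.mp hP
    exact ⟨ap_subset hF (Finset.mem_range.mp hj), isAPOfLength_ap hk j⟩
  · rintro _ hP _ hQ hPQ
    obtain ⟨j, hj, rfl⟩ := Finset.mem_image.mp hP
    obtain ⟨j', hj', rfl⟩ := Finset.mem_image.mp hQ
    exact disjoint_ap (Finset.mem_range.mp hj) (Finset.mem_range.mp hj') fun h => hPQ (h ▸ rfl)

end ConvexAP

end

/-- There are arbitrarily large convex sets `A` containing at least `c·|A|^{1/2}` pairwise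
disjoint arithmetic progressions, each of length at least `c·|A|^{1/2}`. -/
theorem convex_set_with_many_long_disjoint_APs :
    ∃ c : ℝ, 0 < c ∧ ∀ N : ℕ, ∃ A : Finset ℝ,
      IsConvexSet A ∧ N ≤ A.card ∧
      ∃ Ps : Finset (Finset ℝ),
        c * (A.card : ℝ) ^ (1 / 2 : ℝ) ≤ (Ps.card : ℝ) ∧
        (∀ P ∈ Ps, P ⊆ A ∧ ∃ m : ℕ, c * (A.card : ℝ) ^ (1 / 2 : ℝ) ≤ (m : ℝ) ∧
          IsAPOfLength P m) ∧
        (∀ P ∈ Ps, ∀ Q ∈ Ps, P ≠ Q → Disjoint P Q) := by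
  refine ⟨1 / 4, by norm_num, fun N => ?_⟩
  set k := max N 1
  obtain ⟨A, hconv, hkA, hA, Ps, hcard, hPs, hdisj⟩ :=
    ConvexAP.exists_isConvexSet_pairwiseDisjoint_APs (le_max_right N 1 : 0 < k)
  have hbound : 1 / 4 * (A.card : ℝ) ^ (1 / 2 : ℝ) ≤ k := by
    have : √(A.card : ℝ) ≤ 4 * k := Real.sqrt_le_iff.mpr ⟨by positivity, by exact_mod_cast hA⟩
    rw [← Real.sqrt_eq_rpow]
    linarith
  exact ⟨A, hconv, (le_max_left N 1).trans hkA, Ps, hcard ▸ hbound,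
    fun P hP => ⟨(hPs P hP).1, k, hbound, (hPs P hP).2⟩, fun P hP Q hQ => hdisj hP hQ⟩
end

section
/- For every fixed integer k ≥ 3 there exists a constant c_k > 0 such that for every natural number N there is a finite convex set A ⊂ ℝ with |A| ≥ N containing at least c_k·|A|^{3/2} non-trivial k-term arithmetic progressions, i.e. tuples (a₁, …, a_k) ∈ A^k with a_{i+1} − a_i equal to a fixed nonzero common difference for all 1 ≤ i < k. -/
namespace List

variable {α : Type*} [AddMonoid α]

theorem sum_take_mem_partialSums (G : List α) (t : ℕ) : (G.take t).sum ∈ G.partialSums := by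
  have h : min t G.length < G.partialSums.length := by simp
  rw [take_eq_take_min, ← getElem_partialSums h]
  exact getElem_mem h

theorem pairwise_lt_partialSums [PartialOrder α] [AddLeftStrictMono α] {G : List α}
    (hG : ∀ g ∈ G, 0 < g) :
    G.partialSums.Pairwise (· < ·) := by
  refine isChain_iff_pairwise.mp (isChain_iff_getElem.mpr fun i hi => ?_)
  have hiG : i < G.length := by simpa using hi
  simp only [getElem_partialSums, sum_take_succ _ _ hiG]
  exact lt_add_of_pos_right _ (hG _ (getElem_mem hiG))

end List

theorem card_toFinset_partialSums {G : List ℝ} (hpos : ∀ g ∈ G, 0 < g) :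
    G.partialSums.toFinset.card = G.length + 1 := by
  rw [List.toFinset_card_of_nodup (List.pairwise_lt_partialSums hpos).nodup,
    List.length_partialSums]

theorem isConvexSet_toFinset_partialSums {G : List ℝ} (hpos : ∀ g ∈ G, 0 < g)
    (hG : G.Pairwise (· < ·)) : IsConvexSet G.partialSums.toFinset := by
  have hsorted := List.pairwise_lt_partialSums hpos
  intro i hi
  rw [card_toFinset_partialSums hpos] at hi
  rw [(List.toFinset_sort _ hsorted.nodup).mpr (hsorted.imp le_of_lt)]
  have hgap : ∀ t (ht : t < G.length),
      G.partialSums.getD (t + 1) 0 - G.partialSums.getD t 0 = G[t] := fun t ht => by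
    simp [List.getD_eq_getElem?_getD, ht.le, ht, List.sum_take_succ _ _ ht]
  rw [hgap i (by omega), hgap (i + 1) (by omega)]
  exact List.pairwise_iff_getElem.mp hG _ _ _ _ (Nat.lt_succ_self i)

theorem Finset.sum_range_two_mul_add_one_sub_eq_zero (F : ℕ) :
    ∑ r ∈ Finset.range F, (2 * r + 1 - F : ℝ) = 0 := by
  have hodd : ∀ n : ℕ, ∑ r ∈ Finset.range n, (2 * r + 1 : ℝ) = n ^ 2 := fun n => by
    induction n with
    | zero => simp
    | succ n ih => rw [Finset.sum_range_succ, ih]; push_cast; ring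
  rw [Finset.sum_sub_distrib, hodd, Finset.sum_const, Finset.card_range, nsmul_eq_mul]
  ring

theorem exists_pairwise_lt_sum_eq_s3 {lo hi W : ℝ} (hlo : 0 < lo) (hlohi : lo < hi)
    (hW : lo * hi < W * (hi - lo)) :
    ∃ L : List ℝ, L.Pairwise (· < ·) ∧ (∀ x ∈ L, lo < x ∧ x < hi) ∧ L.sum = W := by
  have hhi : 0 < hi := hlo.trans hlohi
  have hWpos : 0 < W := pos_of_mul_pos_left ((mul_pos hlo hhi).trans hW) (by linarith)
  -- `F` parts, with `W / hi < F < W / lo`, spread symmetrically around their mean `W / F`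
  set F : ℕ := ⌊W / hi⌋₊ + 1
  have hF : (0 : ℝ) < F := by positivity
  have hFhi : W < F * hi := by
    rw [← div_lt_iff₀ hhi]; simpa [F] using Nat.lt_floor_add_one (W / hi)
  have hFlo : F * lo < W := by
    have h1 : (F : ℝ) ≤ W / hi + 1 := by
      simp only [F, Nat.cast_add, Nat.cast_one]; gcongr; exact Nat.floor_le (by positivity)
    have h2 : W / hi + 1 < W / lo := by
      rw [div_add_one hhi.ne', div_lt_div_iff₀ hhi hlo]; nlinarith
    rw [← lt_div_iff₀ hlo]; linarith
  set μ := W / F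
  set δ := min (μ - lo) (hi - μ)
  have hδ : 0 < δ := lt_min (by rw [sub_pos, lt_div_iff₀ hF]; linarith)
    (by rw [sub_pos, div_lt_iff₀ hF]; linarith)
  set η := δ / F
  have hη : 0 < η := by positivity
  have hoffset : ∀ r < F, |(2 * r + 1 - F : ℝ) * η| < δ := fun r hr => by
    have hr' : (r : ℝ) + 1 ≤ F := by exact_mod_cast hr
    calc |(2 * r + 1 - F : ℝ) * η| = |(2 * r + 1 - F : ℝ)| * η := by rw [abs_mul, abs_of_pos hη]
      _ < F * η := by gcongr; rw [abs_lt]; constructor <;> linarith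
      _ = δ := mul_div_cancel₀ _ hF.ne'
  refine ⟨(List.range F).map fun r : ℕ => μ + (2 * r + 1 - F) * η, ?_, ?_, ?_⟩
  · refine List.pairwise_map.mpr (List.pairwise_lt_range.imp fun {r s} hrs => ?_)
    have : (r : ℝ) < s := by exact_mod_cast hrs
    nlinarith
  · simp only [List.mem_map, List.mem_range]
    rintro x ⟨r, hr, rfl⟩
    have := abs_lt.mp (hoffset r hr)
    constructor <;> linarith [min_le_left (μ - lo) (hi - μ), min_le_right (μ - lo) (hi - μ)]
  · change ∑ r ∈ Finset.range F, (μ + (2 * r + 1 - F : ℝ) * η) = W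
    rw [Finset.sum_add_distrib, ← Finset.sum_mul, Finset.sum_range_two_mul_add_one_sub_eq_zero,
      Finset.sum_const, Finset.card_range, nsmul_eq_mul, mul_div_cancel₀ _ hF.ne']
    ring

open Classical in
noncomputable def arithProgs (k : ℕ) (A : Finset ℝ) : Finset (Fin k → ℝ) :=
  (Fintype.piFinset fun _ : Fin k => A).filter fun f : Fin k → ℝ =>
    ∃ d : ℝ, d ≠ 0 ∧ ∀ i j : Fin k, (j : ℕ) = (i : ℕ) + 1 → f j = f i + d

theorem mul_mul_le_card_arithProgs {k m n : ℕ} (hk : 2 ≤ k) {A : Finset ℝ} (a d : ℕ → ℝ)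
    (hd : ∀ j < n, d j ≠ 0)
    (hinj : Set.InjOn (fun p : ℕ × ℕ => a p.2 + p.1 * d p.2) (Set.Iio (k * m) ×ˢ Set.Iio n))
    (hA : ∀ i < k * m, ∀ j < n, a j + i * d j ∈ A) :
    n * m * m ≤ (arithProgs k A).card := by
  have hidx : ∀ t < m, ∀ s < m, ∀ r < k, t + r * (s + 1) < k * m := by
    intro t ht s hs r hr
    have h1 : r * (s + 1) ≤ (k - 1) * m := Nat.mul_le_mul (by omega) hs
    have h2 : (k - 1) * m + m = k * m := by
      rw [← Nat.succ_mul, Nat.succ_eq_add_one, Nat.sub_add_cancel (by omega)]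
    omega
  -- `(j, t, s)` gives the progression in column `j` from row `t` in steps of `s + 1` rows
  let ap : ℕ × ℕ × ℕ → Fin k → ℝ := fun p r => a p.1 + (p.2.1 + r * (p.2.2 + 1) : ℕ) * d p.1
  calc n * m * m = (Finset.range n ×ˢ Finset.range m ×ˢ Finset.range m).card := by
        simp [mul_assoc]
    _ ≤ (arithProgs k A).card := Finset.card_le_card_of_injOn ap ?_ ?_
  · simp only [Set.MapsTo, Finset.coe_product, Finset.coe_range, Set.mem_prod, Set.mem_Iio,
      Finset.mem_coe, arithProgs, Finset.mem_filter, Fintype.mem_piFinset, and_imp, Prod.forall]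
    intro j t s hj ht hs
    refine ⟨fun r => hA _ (hidx t ht s hs r r.isLt) j hj, (s + 1) * d j,
      mul_ne_zero (by positivity) (hd j hj), fun r r' hr' => ?_⟩
    simp only [ap, hr']
    push_cast
    ring
  · rintro ⟨j, t, s⟩ hp ⟨j', t', s'⟩ hp' heq
    simp only [Finset.coe_product, Finset.coe_range, Set.mem_prod, Set.mem_Iio] at hp hp'
    obtain ⟨hj, ht, hs⟩ := hp
    obtain ⟨hj', ht', hs'⟩ := hp'
    have hpt := fun (r : ℕ) (hr : r < k) =>
      @hinj (t + r * (s + 1), j) ⟨hidx t ht s hs r hr, hj⟩ (t' + r * (s' + 1), j')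
        ⟨hidx t' ht' s' hs' r hr, hj'⟩ (congrFun heq ⟨r, hr⟩)
    simp only [Prod.mk.injEq] at hpt
    obtain ⟨h0, rfl⟩ := hpt 0 (by omega)
    obtain ⟨h1, -⟩ := hpt 1 (by omega)
    simp only [zero_mul, add_zero, one_mul] at h0 h1
    subst h0
    simp only [Prod.mk.injEq, true_and]
    omega

theorem List.exists_flatMap_range_eq_append {α : Type*} (f : ℕ → List α) {i n : ℕ} (h : i < n) :
    ∃ R, (List.range n).flatMap f = (List.range i).flatMap f ++ (f i ++ R) := by
  obtain ⟨m, rfl⟩ : ∃ m, n = i + 1 + m := ⟨n - (i + 1), by omega⟩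
  rw [List.range_add, List.range_succ]
  simp

namespace convexGrid

variable (T : ℕ)

noncomputable def gap (i j : ℕ) : ℝ := 2 * T ^ 2 + 2 * T * i + j

noncomputable def period : ℝ := 24 * T ^ 3

noncomputable def rowGaps (i : ℕ) : List ℝ := (List.range (T - 1)).map (gap T i)

variable {T}

theorem sum_rowGaps_le {i : ℕ} (hi : i < T) : (rowGaps T i).sum ≤ 4 * T ^ 3 := by
  have hiT : (i : ℝ) + 1 ≤ T := by exact_mod_cast hi
  have hlen : ((T - 1 : ℕ) : ℝ) ≤ T := by exact_mod_cast Nat.sub_le T 1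
  calc (rowGaps T i).sum ≤ (rowGaps T i).length • (4 * (T : ℝ) ^ 2) := by
        refine List.sum_le_card_nsmul _ _ fun x hx => ?_
        obtain ⟨j, hj, rfl⟩ := List.mem_map.mp hx
        have hjT : (j : ℝ) + 1 ≤ T := by
          have := List.mem_range.mp hj; exact_mod_cast (by omega : j + 1 ≤ T)
        simp only [gap]; nlinarith
    _ ≤ 4 * T ^ 3 := by
        rw [rowGaps, List.length_map, List.length_range, nsmul_eq_mul]; nlinarith

variable (T) in
theorem exists_filler (i : ℕ) : ∃ L : List ℝ, i < T →
    L.Pairwise (· < ·) ∧ (∀ x ∈ L, gap T i T < x ∧ x < gap T (i + 1) 0) ∧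
      L.sum = period T - (rowGaps T i).sum := by
  by_cases hi : i < T
  swap; · exact ⟨[], fun h => absurd h hi⟩
  have hiT : (i : ℝ) + 1 ≤ T := by exact_mod_cast hi
  have hT : (0 : ℝ) < T := by linarith [(Nat.cast_nonneg i : (0 : ℝ) ≤ i)]
  have hlo : 0 < gap T i T := by simp only [gap]; positivity
  have hwidth : gap T (i + 1) 0 - gap T i T = T := by simp only [gap]; push_cast; ring
  have hhi : gap T (i + 1) 0 ≤ 4 * T ^ 2 := by simp only [gap]; push_cast; nlinarith
  have hW : 20 * T ^ 3 ≤ period T - (rowGaps T i).sum := by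
    linarith [sum_rowGaps_le hi, show period T = 24 * T ^ 3 from rfl]
  have hlohi : gap T i T < gap T (i + 1) 0 := by linarith
  obtain ⟨L, hL⟩ := exists_pairwise_lt_sum_eq_s3
    (W := period T - (rowGaps T i).sum) hlo hlohi (by
    rw [hwidth]
    calc gap T i T * gap T (i + 1) 0 < gap T (i + 1) 0 * gap T (i + 1) 0 := by
          gcongr; linarith
      _ ≤ 4 * T ^ 2 * (4 * T ^ 2) := by gcongr; linarith
      _ ≤ 20 * T ^ 3 * T := by nlinarith
      _ ≤ _ := by gcongr)
  exact ⟨L, fun _ => hL⟩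

variable (T) in
noncomputable def filler (i : ℕ) : List ℝ := (exists_filler T i).choose

variable (T) in
noncomputable def block (i : ℕ) : List ℝ := rowGaps T i ++ filler T i

variable (T) in
noncomputable def gaps : List ℝ := (List.range T).flatMap (block T)

theorem filler_spec {i : ℕ} (hi : i < T) :
    (filler T i).Pairwise (· < ·) ∧ (∀ x ∈ filler T i, gap T i T < x ∧ x < gap T (i + 1) 0) ∧
      (filler T i).sum = period T - (rowGaps T i).sum :=
  (exists_filler T i).choose_spec hi

theorem mem_Ico_of_mem_block {i : ℕ} (hi : i < T) {x : ℝ} (hx : x ∈ block T i) :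
    x ∈ Set.Ico (gap T i 0) (gap T (i + 1) 0) := by
  rcases List.mem_append.mp hx with hx | hx
  · obtain ⟨j, hj, rfl⟩ := List.mem_map.mp hx
    have hjT : (j : ℝ) + 1 ≤ T := by
      have := List.mem_range.mp hj; exact_mod_cast (by omega : j + 1 ≤ T)
    simp only [gap]; push_cast; constructor <;> nlinarith [(Nat.cast_nonneg j : (0 : ℝ) ≤ j)]
  · have := (filler_spec hi).2.1 x hx
    have : gap T i 0 ≤ gap T i T := by
      simp only [gap]; push_cast; linarith [(Nat.cast_nonneg T : (0 : ℝ) ≤ T)]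
    constructor <;> linarith

theorem pairwise_block {i : ℕ} (hi : i < T) : (block T i).Pairwise (· < ·) := by
  refine List.pairwise_append.mpr ⟨?_, (filler_spec hi).1, fun x hx y hy => ?_⟩
  · refine List.pairwise_map.mpr (List.pairwise_lt_range.imp fun {j j'} hjj => ?_)
    have : (j : ℝ) < j' := by exact_mod_cast hjj
    simp only [gap]; linarith
  · obtain ⟨j, hj, rfl⟩ := List.mem_map.mp hx
    have hjT : (j : ℝ) < T := by have := List.mem_range.mp hj; exact_mod_cast (by omega : j < T)
    have := ((filler_spec hi).2.1 y hy).1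
    simp only [gap] at this ⊢; linarith

theorem sum_block {i : ℕ} (hi : i < T) : (block T i).sum = period T := by
  rw [block, List.sum_append, (filler_spec hi).2.2]; ring

theorem length_filler_le {i : ℕ} (hi : i < T) : (filler T i).length ≤ 12 * T := by
  have hT : (0 : ℝ) < T := by exact_mod_cast (Nat.zero_lt_of_lt hi)
  have hlow : (filler T i).length • (2 * (T : ℝ) ^ 2) ≤ (filler T i).sum :=
    List.card_nsmul_le_sum _ _ fun x hx => by
      have hx := ((filler_spec hi).2.1 x hx).1
      have : (0 : ℝ) ≤ T * i := by positivity
      simp only [gap] at hx; linarith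
  have hrow : 0 ≤ (rowGaps T i).sum :=
    List.sum_nonneg fun x hx => by
      obtain ⟨j, -, rfl⟩ := List.mem_map.mp hx; simp only [gap]; positivity
  rw [(filler_spec hi).2.2, nsmul_eq_mul, period] at hlow
  have : ((filler T i).length : ℝ) ≤ 12 * T :=
    le_of_mul_le_mul_right (a := 2 * (T : ℝ) ^ 2) (by linarith) (by positivity)
  exact_mod_cast this

theorem pos_of_mem_gaps {x : ℝ} (hx : x ∈ gaps T) : 0 < x := by
  obtain ⟨i, hi, hx⟩ := List.mem_flatMap.mp hx
  have hi := List.mem_range.mp hi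
  have := (mem_Ico_of_mem_block hi hx).1
  have : (0 : ℝ) < T := by exact_mod_cast (Nat.zero_lt_of_lt hi)
  have : (0 : ℝ) ≤ T * i := by positivity
  simp only [gap, Nat.cast_zero, add_zero] at *
  nlinarith

theorem pairwise_gaps : (gaps T).Pairwise (· < ·) := by
  refine List.pairwise_flatMap.mpr ⟨fun i hi => pairwise_block (List.mem_range.mp hi), ?_⟩
  refine List.pairwise_iff_getElem.mpr fun a b ha hb hab x hx y hy => ?_
  simp only [List.getElem_range, List.length_range] at ha hb hx hy ⊢
  have h1 := (mem_Ico_of_mem_block ha hx).2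
  have h2 := (mem_Ico_of_mem_block hb hy).1
  have : (a : ℝ) + 1 ≤ b := by exact_mod_cast hab
  simp only [gap] at h1 h2; push_cast at h1
  nlinarith [(Nat.cast_nonneg T : (0 : ℝ) ≤ T)]

end convexGrid

noncomputable def convexGrid (T : ℕ) : Finset ℝ := (convexGrid.gaps T).partialSums.toFinset

namespace convexGrid

variable {T : ℕ}

theorem isConvexSet : IsConvexSet (convexGrid T) :=
  isConvexSet_toFinset_partialSums (fun _ => pos_of_mem_gaps) pairwise_gaps

theorem card_eq : (convexGrid T).card = (gaps T).length + 1 :=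
  card_toFinset_partialSums fun _ => pos_of_mem_gaps

theorem length_block {i : ℕ} : (block T i).length = T - 1 + (filler T i).length := by
  simp [block, rowGaps]

theorem le_card : T ≤ (convexGrid T).card := by
  have : T • (T - 1) ≤ (gaps T).length := by
    rw [gaps, List.length_flatMap]
    simpa using List.card_nsmul_le_sum ((List.range T).map fun i => (block T i).length) (T - 1)
      (by simp only [List.mem_map]; rintro _ ⟨i, -, rfl⟩; rw [length_block]; omega)
  rw [card_eq, smul_eq_mul] at *
  rcases T with _ | T
  · omega
  · simp only [Nat.add_sub_cancel] at this; nlinarith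

theorem card_le (hT : 0 < T) : (convexGrid T).card ≤ (4 * T) ^ 2 := by
  have : (gaps T).length ≤ T • (13 * T) := by
    rw [gaps, List.length_flatMap]
    simpa using List.sum_le_card_nsmul ((List.range T).map fun i => (block T i).length) (13 * T)
      (by
        simp only [List.mem_map, List.mem_range, forall_exists_index, and_imp]
        rintro _ i hi rfl
        have := length_filler_le hi
        rw [length_block]; omega)
  rw [card_eq]
  rw [smul_eq_mul] at this
  nlinarith

theorem sum_flatMap_range_block {i : ℕ} (hi : i ≤ T) :
    ((List.range i).flatMap (block T)).sum = i * period T := by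
  induction i with
  | zero => simp
  | succ i ih =>
    rw [List.range_succ, List.flatMap_append, List.sum_append, ih (by omega)]
    simp only [List.flatMap_cons, List.flatMap_nil, List.append_nil, sum_block (by omega : i < T),
      Nat.cast_add, Nat.cast_one]
    ring

variable (T) in
noncomputable def base (j : ℕ) : ℝ := ∑ j' ∈ Finset.range j, gap T 0 j'

variable (T) in
noncomputable def step (j : ℕ) : ℝ := period T + 2 * T * j

theorem base_add_mul_step_mem {i j : ℕ} (hi : i < T) (hj : j < T) :
    base T j + i * step T j ∈ convexGrid T := by
  obtain ⟨R, hR⟩ := List.exists_flatMap_range_eq_append (block T) hi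
  have hrow : j ≤ (rowGaps T i).length := by
    simp only [rowGaps, List.length_map, List.length_range]; omega
  have htake : (gaps T).take (((List.range i).flatMap (block T)).length + j) =
      (List.range i).flatMap (block T) ++ (List.range j).map (gap T i) := by
    rw [gaps, hR, List.take_length_add_append, block, List.append_assoc,
      List.take_append_of_le_length hrow, rowGaps, ← List.map_take, List.take_range,
      min_eq_left (by omega)]
  have hmem := List.sum_take_mem_partialSums (gaps T)
    (((List.range i).flatMap (block T)).length + j)
  rw [htake, List.sum_append, sum_flatMap_range_block hi.le] at hmem
  rw [convexGrid, List.mem_toFinset]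
  convert hmem using 1
  change _ = _ + ∑ j' ∈ Finset.range j, gap T i j'
  simp only [base, step, gap, Finset.sum_add_distrib, Finset.sum_const, Finset.card_range,
    nsmul_eq_mul]
  push_cast
  ring

theorem step_pos (hT : 0 < T) (j : ℕ) : 0 < step T j := by
  simp only [step, period]; positivity

theorem strictMono_base_add_mul_step (hT : 0 < T) (i : ℕ) :
    StrictMono fun j => base T j + i * step T j :=
  strictMono_nat_of_lt_succ fun j => by
    have : (0 : ℝ) < T := by exact_mod_cast hT
    simp only [base, step, Finset.sum_range_succ, gap]
    push_cast
    nlinarith [(Nat.cast_nonneg i : (0 : ℝ) ≤ i), (Nat.cast_nonneg j : (0 : ℝ) ≤ j)]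

theorem base_add_mul_step_mem_Ico {i j : ℕ} (hi : i < T) (hj : j < T) :
    base T j + i * step T j ∈ Set.Ico (i * period T) ((i + 1) * period T) := by
  have hT : (1 : ℝ) ≤ T := by exact_mod_cast Nat.one_le_of_lt hi
  have hiT : (i : ℝ) ≤ T := by exact_mod_cast hi.le
  have hjT : (j : ℝ) ≤ T := by exact_mod_cast hj.le
  have hbase : base T j ≤ j * (3 * (T : ℝ) ^ 2) := by
    have := Finset.sum_le_card_nsmul (Finset.range j) (gap T 0) (3 * (T : ℝ) ^ 2) fun j' hj' => by
      have : (j' : ℝ) ≤ T := by exact_mod_cast (Finset.mem_range.mp hj').le.trans hj.le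
      simp only [gap]; push_cast; nlinarith
    simpa [base] using this
  have hbase' : (j : ℝ) * (3 * T ^ 2) ≤ T * (3 * T ^ 2) := by gcongr
  have hstep : (i : ℝ) * (2 * T * j) ≤ T * (2 * T * T) := by gcongr
  have hbase0 : 0 ≤ base T j :=
    Finset.sum_nonneg fun _ _ => by simp only [gap]; positivity
  simp only [step, period, Set.mem_Ico]
  constructor <;> nlinarith [(Nat.cast_nonneg i : (0 : ℝ) ≤ i), (Nat.cast_nonneg j : (0 : ℝ) ≤ j)]

theorem injOn_base_add_mul_step :
    Set.InjOn (fun p : ℕ × ℕ => base T p.2 + p.1 * step T p.2) (Set.Iio T ×ˢ Set.Iio T) := by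
  rintro ⟨i, j⟩ ⟨hi, hj⟩ ⟨i', j'⟩ ⟨hi', hj'⟩ h
  simp only [Set.mem_Iio] at hi hj hi' hj' h
  have hT := Nat.zero_lt_of_lt hi
  have hP : 0 < period T := by simp only [period]; positivity
  have h₁ := base_add_mul_step_mem_Ico hi hj
  have h₂ := base_add_mul_step_mem_Ico hi' hj'
  rw [h] at h₁
  have hlt : ∀ a b : ℕ, (a : ℝ) * period T < (b + 1) * period T → a ≤ b := fun a b hab => by
    exact Nat.lt_succ_iff.mp (by exact_mod_cast lt_of_mul_lt_mul_right hab hP.le)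
  obtain rfl : i = i' := le_antisymm (hlt _ _ (h₁.1.trans_lt h₂.2)) (hlt _ _ (h₂.1.trans_lt h₁.2))
  rw [(strictMono_base_add_mul_step hT i).injective h]

end convexGrid

theorem Real.rpow_three_halves_le {x y : ℝ} (hx : 0 ≤ x) (hy : 0 ≤ y) (h : x ≤ y ^ 2) :
    x ^ (3 / 2 : ℝ) ≤ y ^ 3 :=
  calc x ^ (3 / 2 : ℝ) ≤ (y ^ 2) ^ (3 / 2 : ℝ) := Real.rpow_le_rpow hx h (by norm_num)
    _ = y ^ 3 := by
      rw [← Real.rpow_natCast y 2, ← Real.rpow_mul hy, ← Real.rpow_natCast y 3]; norm_num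

open Classical in
/-- For every fixed `k ≥ 3` there are arbitrarily large convex sets `A` containing at least
`c_k·|A|^{3/2}` non-trivial `k`-term arithmetic progressions, counted as tuples
`(a₁, …, a_k) ∈ A^k` with nonzero common difference `d`. -/
theorem convex_set_with_many_kAPs (k : ℕ) (hk : 3 ≤ k) :
    ∃ c : ℝ, 0 < c ∧ ∀ N : ℕ, ∃ A : Finset ℝ,
      IsConvexSet A ∧ N ≤ A.card ∧
      c * (A.card : ℝ) ^ (3 / 2 : ℝ) ≤
        (((Fintype.piFinset fun _ : Fin k => A).filter fun f : Fin k → ℝ =>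
          ∃ d : ℝ, d ≠ 0 ∧ ∀ i j : Fin k, (j : ℕ) = (i : ℕ) + 1 → f j = f i + d).card : ℝ) := by
  refine ⟨1 / (64 * k ^ 2), by positivity, fun N => ?_⟩
  set T := k * (N + 1)
  have hT : 0 < T := by positivity
  have hcount : T * (N + 1) * (N + 1) ≤ (arithProgs k (convexGrid T)).card :=
    mul_mul_le_card_arithProgs (by omega) (convexGrid.base T) (convexGrid.step T)
      (fun j _ => (convexGrid.step_pos hT j).ne') convexGrid.injOn_base_add_mul_step
      fun i hi j hj => convexGrid.base_add_mul_step_mem hi hj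
  refine ⟨convexGrid T, convexGrid.isConvexSet, le_trans ?_ convexGrid.le_card, ?_⟩
  · exact le_trans (Nat.le_succ N) (Nat.le_mul_of_pos_left _ (by omega))
  calc 1 / (64 * k ^ 2) * ((convexGrid T).card : ℝ) ^ (3 / 2 : ℝ)
      ≤ 1 / (64 * k ^ 2) * (4 * T : ℝ) ^ 3 := by
        gcongr
        exact Real.rpow_three_halves_le (by positivity) (by positivity)
          (by exact_mod_cast convexGrid.card_le hT)
    _ = ((T * (N + 1) * (N + 1) : ℕ) : ℝ) := by
        have : (k : ℝ) ≠ 0 := by positivity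
        simp only [T]; push_cast; field_simp; ring
    _ ≤ ((arithProgs k (convexGrid T)).card : ℝ) := by exact_mod_cast hcount
end

section
/- There exists an absolute constant C > 0 such that every finite convex set A ⊂ ℝ satisfies T₃(A) ≤ C·|A|^{5/3}, where T₃(A) := #{(a,b,c) ∈ A³ : 2a = b + c}. -/
open Finset

theorem card_filter_add_le_le_sq {P : Finset (ℕ × ℕ)} (hpos : ∀ p ∈ P, 0 < p.1 ∧ 0 < p.2)
    (K : ℕ) : #{p ∈ P | p.1 + p.2 ≤ K} ≤ K ^ 2 := by
  calc #{p ∈ P | p.1 + p.2 ≤ K} ≤ #(Icc 1 K ×ˢ Icc 1 K) := by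
        refine card_le_card fun p hp => ?_
        obtain ⟨hp, hK⟩ := mem_filter.1 hp
        have := hpos p hp
        simp only [mem_product, mem_Icc]
        omega
    _ = K ^ 2 := by simp [sq]

theorem card_pow_three_le_of_sum_le {P : Finset (ℕ × ℕ)} {N : ℕ}
    (hpos : ∀ p ∈ P, 0 < p.1 ∧ 0 < p.2) (hsum : ∑ p ∈ P, (p.1 + p.2) ≤ N) :
    #P ^ 3 ≤ 27 * N ^ 2 := by
  -- at most `K²` pairs have coordinate sum `≤ K`, every other one contributes more than `K`
  have hsplit : ∀ K, (#P - K ^ 2) * (K + 1) ≤ N := fun K => by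
    have hlarge : #{p ∈ P | ¬p.1 + p.2 ≤ K} • (K + 1) ≤ N :=
      (card_nsmul_le_sum _ _ _ fun p hp => by simp only [mem_filter] at hp; omega).trans
        ((sum_le_sum_of_subset (filter_subset _ P)).trans hsum)
    have := card_filter_add_card_filter_not (s := P) (fun p => p.1 + p.2 ≤ K)
    have := card_filter_add_le_le_sq hpos K
    rw [smul_eq_mul] at hlarge
    exact (Nat.mul_le_mul_right _ (by omega)).trans hlarge
  set m := #P
  obtain hm | hm := lt_or_ge m 2
  · have hmN : m ≤ N := by simpa using hsplit 0
    calc m ^ 3 ≤ m := by interval_cases m <;> rfl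
      _ ≤ 27 * N ^ 2 := by nlinarith
  -- balance the two contributions with `K ≈ √(m / 2)`
  set K := Nat.sqrt (m / 2)
  have hK : K ^ 2 ≤ m / 2 := Nat.sqrt_le' _
  have hK' : m / 2 < (K + 1) ^ 2 := Nat.lt_succ_sqrt' _
  have hN : m / 2 * (K + 1) ≤ N := (Nat.mul_le_mul_right _ (by omega)).trans (hsplit K)
  calc m ^ 3 ≤ (3 * (m / 2)) ^ 3 := Nat.pow_le_pow_left (by omega) 3
    _ = 27 * ((m / 2) ^ 2 * (m / 2)) := by ring
    _ ≤ 27 * ((m / 2) ^ 2 * (K + 1) ^ 2) := by gcongr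
    _ = 27 * (m / 2 * (K + 1)) ^ 2 := by ring
    _ ≤ 27 * N ^ 2 := by gcongr

theorem sub_one_pow_three_le_of_injOn_steps {f g : ℕ → ℕ} {t N : ℕ}
    (hf : ∀ p, p + 1 < t → f p < f (p + 1)) (hg : ∀ p, p + 1 < t → g (p + 1) < g p)
    (hinj : Set.InjOn (fun p => (g p - g (p + 1), f (p + 1) - f p)) (Set.Iio (t - 1)))
    (hN : f (t - 1) + g 0 ≤ N) :
    (t - 1) ^ 3 ≤ 27 * N ^ 2 := by
  have htele : ∀ m ≤ t - 1,
      ∑ p ∈ range m, ((g p - g (p + 1)) + (f (p + 1) - f p)) + f 0 + g m = f m + g 0 := by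
    intro m hm
    induction m with
    | zero => simp
    | succ m ih =>
      have := ih (by omega)
      have := hf m (by omega)
      have := hg m (by omega)
      rw [sum_range_succ]
      omega
  have hinj' : Set.InjOn (fun p => (g p - g (p + 1), f (p + 1) - f p)) (range (t - 1)) := by
    simpa using hinj
  simpa [card_image_of_injOn hinj'] using card_pow_three_le_of_sum_le
    (P := (range (t - 1)).image fun p => (g p - g (p + 1), f (p + 1) - f p)) (N := N)
    (by
      simp only [mem_image, mem_range]
      rintro _ ⟨p, hp, rfl⟩
      have := hf p (by omega)
      have := hg p (by omega)
      omega)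
    (by
      rw [sum_image hinj']
      dsimp only
      have := htele (t - 1) le_rfl
      omega)

namespace Finset

variable {α : Type*} [LinearOrder α] {s : Finset α}

theorem getD_sort_mem {i : ℕ} (hi : i < #s) (d : α) : (s.sort (· ≤ ·)).getD i d ∈ s := by
  rw [List.getD_eq_getElem _ _ (by simpa using hi)]
  exact (mem_sort _).1 (List.getElem_mem _)

theorem strictMonoOn_getD_sort (d : α) :
    StrictMonoOn (fun i => (s.sort (· ≤ ·)).getD i d) (Set.Iio #s) := by
  intro i hi j hj hij
  simp only [Set.mem_Iio] at hi hj
  dsimp only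
  rw [List.getD_eq_getElem _ _ (by simpa using hi), List.getD_eq_getElem _ _ (by simpa using hj)]
  exact s.sortedLT_sort.getElem_lt_getElem_iff.2 hij

theorem idxOf_sort_lt_card {x : α} (hx : x ∈ s) : (s.sort (· ≤ ·)).idxOf x < #s := by
  simpa using List.idxOf_lt_length_iff.2 ((mem_sort (· ≤ ·)).2 hx)

theorem getD_sort_idxOf {x : α} (hx : x ∈ s) (d : α) :
    (s.sort (· ≤ ·)).getD ((s.sort (· ≤ ·)).idxOf x) d = x := by
  rw [List.getD_eq_getElem _ _ (by simpa using idxOf_sort_lt_card hx)]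
  exact List.getElem_idxOf _

theorem idxOf_sort_lt_idxOf_sort_iff {x y : α} (hx : x ∈ s) (hy : y ∈ s) :
    (s.sort (· ≤ ·)).idxOf x < (s.sort (· ≤ ·)).idxOf y ↔ x < y := by
  have := (strictMonoOn_getD_sort x).lt_iff_lt (idxOf_sort_lt_card hx) (idxOf_sort_lt_card hy)
  simp only [getD_sort_idxOf hx, getD_sort_idxOf hy] at this
  exact this.symm

theorem idxOf_sort_le_idxOf_sort_iff {x y : α} (hx : x ∈ s) (hy : y ∈ s) :
    (s.sort (· ≤ ·)).idxOf x ≤ (s.sort (· ≤ ·)).idxOf y ↔ x ≤ y := by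
  simpa only [not_lt] using (idxOf_sort_lt_idxOf_sort_iff hy hx).not

end Finset

theorem sub_lt_sub_of_strictMonoOn_sub {β : Type*} [AddCommGroup β] [PartialOrder β]
    [IsOrderedCancelAddMonoid β] {a : ℕ → β} {m : ℕ}
    (ha : StrictMonoOn (fun i => a (i + 1) - a i) (Set.Iio m)) {u x y : ℕ} (hu : 0 < u)
    (hxy : x + u ≤ y) (hy : y + u ≤ m) :
    a (x + u) - a x < a (y + u) - a y := by
  have hsum (z : ℕ) : a (z + u) - a z = ∑ i ∈ range u, (a (z + (i + 1)) - a (z + i)) :=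
    (sum_range_sub (fun i => a (z + i)) u).symm
  rw [hsum x, hsum y]
  refine sum_lt_sum_of_nonempty (nonempty_range_iff.2 hu.ne') fun i hi => ?_
  rw [mem_range] at hi
  exact @ha (x + i) (by simp; omega) (y + i) (by simp; omega) (by omega)

namespace IsConvexSet

variable {A : Finset ℝ}

theorem strictMonoOn_sub (hA : IsConvexSet A) :
    StrictMonoOn (fun i => (A.sort (· ≤ ·)).getD (i + 1) 0 - (A.sort (· ≤ ·)).getD i 0)
      (Set.Iio (#A - 1)) :=
  strictMonoOn_of_lt_add_one Set.ordConnected_Iio fun i _ _ hi => hA i (by simp at hi; omega)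

theorem sub_lt_sub_of_idxOf_sub_eq (hA : IsConvexSet A) {x x' y y' : ℝ} (hx : x ∈ A) (hx' : x' ∈ A)
    (hy : y ∈ A) (hy' : y' ∈ A)
    (hxx' : (A.sort (· ≤ ·)).idxOf x < (A.sort (· ≤ ·)).idxOf x')
    (hx'y : (A.sort (· ≤ ·)).idxOf x' ≤ (A.sort (· ≤ ·)).idxOf y)
    (hgap : (A.sort (· ≤ ·)).idxOf x' - (A.sort (· ≤ ·)).idxOf x =
      (A.sort (· ≤ ·)).idxOf y' - (A.sort (· ≤ ·)).idxOf y) :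
    x' - x < y' - y := by
  have hy'A := idxOf_sort_lt_card hy'
  have := sub_lt_sub_of_strictMonoOn_sub hA.strictMonoOn_sub
    (u := (A.sort (· ≤ ·)).idxOf x' - (A.sort (· ≤ ·)).idxOf x)
    (a := fun i => (A.sort (· ≤ ·)).getD i 0) (x := (A.sort (· ≤ ·)).idxOf x)
    (y := (A.sort (· ≤ ·)).idxOf y) (by omega) (by omega) (by omega)
  rwa [Nat.add_sub_cancel' hxx'.le, hgap, Nat.add_sub_cancel' (by omega), getD_sort_idxOf hx,
    getD_sort_idxOf hx', getD_sort_idxOf hy, getD_sort_idxOf hy'] at this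

theorem card_filter_sub_mem_sub_one_pow_three_le (hA : IsConvexSet A) (s : ℝ) :
    (#{x ∈ A | s - x ∈ A} - 1) ^ 3 ≤ 108 * #A ^ 2 := by
  set D := {x ∈ A | s - x ∈ A}
  set x : ℕ → ℝ := fun p => (D.sort (· ≤ ·)).getD p 0
  set idx : ℝ → ℕ := fun y => (A.sort (· ≤ ·)).idxOf y
  set step : ℕ → ℕ × ℕ := fun p =>
    (idx (s - x p) - idx (s - x (p + 1)), idx (x (p + 1)) - idx (x p))
  have hxD (p : ℕ) (hp : p < #D) : x p ∈ A ∧ s - x p ∈ A := mem_filter.1 (getD_sort_mem hp 0)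
  have hx_lt {p q : ℕ} (hpq : p < q) (hq : q < #D) : x p < x q :=
    strictMonoOn_getD_sort 0 (Set.mem_Iio.2 (hpq.trans hq)) hq hpq
  have hf (p : ℕ) (hp : p + 1 < #D) : idx (x p) < idx (x (p + 1)) :=
    (idxOf_sort_lt_idxOf_sort_iff (hxD p (by omega)).1 (hxD _ hp).1).2 (hx_lt (by omega) hp)
  have hg (p : ℕ) (hp : p + 1 < #D) : idx (s - x (p + 1)) < idx (s - x p) :=
    (idxOf_sort_lt_idxOf_sort_iff (hxD _ hp).2 (hxD p (by omega)).2).2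
      (by linarith [hx_lt (Nat.lt_succ_self p) hp])
  -- by convexity the `x`-block of step `q` spans more than that of step `p` and the `(s - x)`-block
  -- less, but within each step both blocks span the same distance
  have hne {p q : ℕ} (hpq : p < q) (hq : q + 1 < #D) : step p ≠ step q := by
    intro heq
    obtain ⟨hleft, hright⟩ := Prod.mk.inj heq
    have hpq' : x (p + 1) ≤ x q := by
      rcases (show p + 1 ≤ q by omega).eq_or_lt with h | h
      · rw [h]
      · exact (hx_lt h (by omega)).le
    have hR := hA.sub_lt_sub_of_idxOf_sub_eq (hxD p (by omega)).1 (hxD (p + 1) (by omega)).1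
      (hxD q (by omega)).1 (hxD (q + 1) hq).1 (hf p (by omega))
      ((idxOf_sort_le_idxOf_sort_iff (hxD _ (by omega)).1 (hxD q (by omega)).1).2 hpq') hright
    have hL := hA.sub_lt_sub_of_idxOf_sub_eq (hxD (q + 1) hq).2 (hxD q (by omega)).2
      (hxD (p + 1) (by omega)).2 (hxD p (by omega)).2 (hg q hq)
      ((idxOf_sort_le_idxOf_sort_iff (hxD q (by omega)).2 (hxD _ (by omega)).2).2 (by linarith))
      hleft.symm
    linarith
  have hinj : Set.InjOn step (Set.Iio (#D - 1)) := by
    intro p hp q hq h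
    simp only [Set.mem_Iio] at hp hq
    by_contra hpq
    rcases Nat.lt_or_gt_of_ne hpq with hpq | hpq
    · exact hne hpq (by omega) h
    · exact hne hpq (by omega) h.symm
  have hN : idx (x (#D - 1)) + idx (s - x 0) ≤ 2 * #A := by
    have h1 : idx (x (#D - 1)) ≤ #A := List.idxOf_le_length.trans_eq (length_sort _)
    have h2 : idx (s - x 0) ≤ #A := List.idxOf_le_length.trans_eq (length_sort _)
    omega
  calc (#D - 1) ^ 3 ≤ 27 * (2 * #A) ^ 2 := sub_one_pow_three_le_of_injOn_steps hf hg hinj hN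
    _ = 108 * #A ^ 2 := by ring

end IsConvexSet

theorem card_threeAP_le_sum_card {R : Type*} [Ring R] [DecidableEq R] (A : Finset R) :
    #{t ∈ A ×ˢ A ×ˢ A | 2 * t.1 = t.2.1 + t.2.2} ≤ ∑ b ∈ A, #{x ∈ A | 2 * b - x ∈ A} := by
  rw [card_eq_sum_card_fiberwise (f := Prod.fst) (t := A)
    fun t ht => (mem_product.1 (mem_filter.1 ht).1).1]
  refine sum_le_sum fun b _ => card_le_card_of_injOn (fun t => t.2.1) ?_ ?_
  · rintro ⟨a, c, d⟩ ht
    simp only [mem_coe, mem_filter, mem_product] at ht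
    obtain ⟨⟨⟨-, hc, hd⟩, h⟩, rfl⟩ := ht
    exact mem_filter.2 ⟨hc, by rwa [h, add_sub_cancel_left]⟩
  · rintro ⟨a, c, d⟩ ht ⟨a', c', d'⟩ ht' (rfl : c = c')
    simp only [mem_coe, mem_filter, mem_product] at ht ht'
    obtain ⟨⟨-, h⟩, rfl⟩ := ht
    obtain ⟨⟨-, h'⟩, rfl⟩ := ht'
    simp only [Prod.mk.injEq, true_and]
    exact add_left_cancel (h.symm.trans h')

theorem natCast_le_mul_rpow_of_sub_one_pow_three_le {m N : ℕ} (hN : 1 ≤ N)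
    (h : (m - 1) ^ 3 ≤ 108 * N ^ 2) :
    (m : ℝ) ≤ 6 * (N : ℝ) ^ (2 / 3 : ℝ) := by
  have hN' : (1 : ℝ) ≤ N := by exact_mod_cast hN
  have hcube : ((N : ℝ) ^ (2 / 3 : ℝ)) ^ 3 = (N : ℝ) ^ 2 := by
    rw [← Real.rpow_natCast, ← Real.rpow_mul (by positivity)]
    norm_num
  have hm : ((m - 1 : ℕ) : ℝ) ≤ 5 * (N : ℝ) ^ (2 / 3 : ℝ) := by
    refine le_of_pow_le_pow_left₀ three_ne_zero (by positivity) ?_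
    rw [mul_pow, hcube]
    have : (((m - 1) ^ 3 : ℕ) : ℝ) ≤ ((108 * N ^ 2 : ℕ) : ℝ) := by exact_mod_cast h
    push_cast at this
    nlinarith
  have h1 : (1 : ℝ) ≤ (N : ℝ) ^ (2 / 3 : ℝ) := Real.one_le_rpow hN' (by norm_num)
  have : (m : ℝ) ≤ ((m - 1 : ℕ) : ℝ) + 1 := by exact_mod_cast (by omega : m ≤ m - 1 + 1)
  linarith

/-- Every convex set `A ⊆ ℝ` satisfies `T₃(A) ≤ C·|A|^{5/3}`, where `T₃(A)` is the number of
triples `(a, b, c) ∈ A³` with `2a = b + c`. -/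
theorem threeAP_count_upper_bound :
    ∃ C : ℝ, 0 < C ∧ ∀ A : Finset ℝ, IsConvexSet A →
      (((A ×ˢ A ×ˢ A).filter fun t => 2 * t.1 = t.2.1 + t.2.2).card : ℝ) ≤
        C * (A.card : ℝ) ^ (5 / 3 : ℝ) := by
  refine ⟨6, by norm_num, fun A hA => ?_⟩
  have hrep (b : ℝ) (hb : b ∈ A) : (#{x ∈ A | 2 * b - x ∈ A} : ℝ) ≤ 6 * (#A : ℝ) ^ (2 / 3 : ℝ) :=
    natCast_le_mul_rpow_of_sub_one_pow_three_le (card_pos.2 ⟨b, hb⟩)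
      (hA.card_filter_sub_mem_sub_one_pow_three_le _)
  calc (#{t ∈ A ×ˢ A ×ˢ A | 2 * t.1 = t.2.1 + t.2.2} : ℝ)
      ≤ ∑ b ∈ A, (#{x ∈ A | 2 * b - x ∈ A} : ℝ) := by exact_mod_cast card_threeAP_le_sum_card A
    _ ≤ ∑ _b ∈ A, 6 * (#A : ℝ) ^ (2 / 3 : ℝ) := sum_le_sum hrep
    _ = 6 * (#A : ℝ) ^ (5 / 3 : ℝ) := by
      rw [sum_const, nsmul_eq_mul, show (5 / 3 : ℝ) = 1 + 2 / 3 by norm_num,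
        Real.rpow_add' (Nat.cast_nonneg _) (by norm_num), Real.rpow_one]
      ring
end

section
/- There exists an absolute constant C > 0 such that if A ⊂ ℝ is a finite convex set and P ⊆ A is an arithmetic progression (a set of the form {x, x+d, …, x+(m−1)d} with d ≠ 0), then |P| ≤ C·|A|^{1/2}. -/
/-! Enumerate `A` as `a₀ < a₁ < ⋯ < a_{n-1}` and let the terms `x + j d` (`d > 0`) of the
progression sit at indices `t₀ < t₁ < ⋯ < t_{m-1}`. Each step `d = a_{t_{j+1}} - a_{t_j}` is
the sum of the `t_{j+1} - t_j` consecutive gaps in between; as the gaps increase, a later block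
of gaps with the same sum `d` must be strictly shorter. So the `m - 1` index steps are strictly
decreasing positive integers, hence sum to at least `m(m-1)/2`, while their sum is at most
`n - 1`. Thus `m(m-1) ≤ 2(n-1)`, and `m ≤ 2√n`. -/

open Finset
open scoped fwdDiff

theorem le_apply_add_of_succ_lt {k : ℕ → ℤ} {l : ℕ}
    (hk : ∀ j, j + 1 < l → k (j + 1) < k j) (hpos : ∀ j < l, 0 < k j) :
    ∀ j < l, (l : ℤ) ≤ k j + j := by
  intro j hj
  induction hr : l - 1 - j generalizing j with
  | zero => have := hpos j hj; omega
  | succ r ih =>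
    have := ih (j + 1) (by omega) (by omega)
    have := hk j (by omega)
    omega

theorem mul_sub_one_le_two_mul_sub {t : ℕ → ℤ} {m : ℕ}
    (hmono : ∀ j, j + 1 < m → t j < t (j + 1))
    (hconc : ∀ j, j + 2 < m → t (j + 2) - t (j + 1) < t (j + 1) - t j) :
    (m : ℤ) * (m - 1) ≤ 2 * (t (m - 1) - t 0) := by
  induction m generalizing t with
  | zero => simp
  | succ m ih =>
    rcases m with _ | m
    · simp
    have hrest := ih (t := fun j => t (j + 1)) (fun j hj => hmono (j + 1) (by omega))
      (fun j hj => hconc (j + 1) (by omega))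
    have hfirst := le_apply_add_of_succ_lt (k := fun j => t (j + 1) - t j) (l := m + 1)
      (fun j hj => hconc j (by omega)) (fun j hj => sub_pos.2 (hmono j (by omega))) 0 (by omega)
    push_cast at hrest hfirst ⊢
    linarith

section ConvexSequence

variable {a : ℕ → ℝ} {n : ℕ}

theorem sub_lt_sub_of_apply_sub_eq (hg : StrictMonoOn (Δ_[1] a) (Set.Iio (n - 1))) {p q s : ℕ}
    (hpq : p < q) (hqs : q ≤ s) (hs : s < n) (hd : 0 < a q - a p) (heq : a s - a q = a q - a p) :
    s - q < q - p := by
  rcases hqs.eq_or_lt with rfl | hqs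
  · omega
  have hup : a q - a p ≤ (q - p : ℕ) * Δ_[1] a (q - 1) := by
    rw [← sum_Ico_sub a hpq.le, ← Nat.card_Ico, ← nsmul_eq_mul]
    refine sum_le_card_nsmul _ _ _ fun i hi => ?_
    rw [Finset.mem_Ico] at hi
    exact hg.monotoneOn (by simp; omega) (by simp; omega) (by omega)
  have hlow : (s - q : ℕ) * Δ_[1] a q ≤ a s - a q := by
    rw [← sum_Ico_sub a hqs.le, ← Nat.card_Ico, ← nsmul_eq_mul]
    refine card_nsmul_le_sum _ _ _ fun i hi => ?_
    rw [Finset.mem_Ico] at hi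
    exact hg.monotoneOn (by simp; omega) (by simp; omega) hi.1
  have hstep : Δ_[1] a (q - 1) < Δ_[1] a q := hg (by simp; omega) (by simp; omega) (by omega)
  have hpos : 0 < Δ_[1] a q := by
    by_contra! h
    nlinarith [(Nat.cast_nonneg (q - p) : (0 : ℝ) ≤ _)]
  have hqp : (0 : ℝ) < (q - p : ℕ) := by exact_mod_cast Nat.sub_pos_of_lt hpq
  have : ((s - q : ℕ) : ℝ) * Δ_[1] a q < (q - p : ℕ) * Δ_[1] a q := by
    nlinarith [mul_lt_mul_of_pos_left hstep hqp]
  exact_mod_cast lt_of_mul_lt_mul_right this hpos.le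

theorem mul_sub_one_le_of_forall_mem_image (ha : StrictMonoOn a (Set.Iio n))
    (hg : StrictMonoOn (Δ_[1] a) (Set.Iio (n - 1))) {m : ℕ} {x d : ℝ} (hd : d ≠ 0)
    (hm : 0 < m) (hAP : ∀ j < m, x + j * d ∈ a '' Set.Iio n) : (m : ℤ) * (m - 1) ≤ 2 * (n - 1) := by
  wlog hpos : 0 < d generalizing x d
  · refine this (x := x + (m - 1) * d) (d := -d) (by simpa) (fun j hj => ?_)
      (neg_pos.2 ((not_lt.1 hpos).lt_of_ne hd))
    convert hAP (m - 1 - j) (by omega) using 1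
    push_cast [Nat.sub_sub, Nat.cast_sub (show 1 + j ≤ m by omega)]
    ring
  choose! t ht hat using hAP
  have hstep : ∀ j, j + 1 < m → a (t (j + 1)) - a (t j) = d := by
    intro j hj
    rw [hat _ hj, hat _ (by omega)]
    push_cast
    ring
  have hmono : ∀ j, j + 1 < m → t j < t (j + 1) := fun j hj =>
    (ha.lt_iff_lt (ht j (by omega)) (ht (j + 1) hj)).1 (by linarith [hstep j hj])
  have hconc : ∀ j, j + 2 < m → t (j + 2) - t (j + 1) < t (j + 1) - t j := fun j hj =>
    sub_lt_sub_of_apply_sub_eq hg (hmono j (by omega)) (hmono (j + 1) hj).le (ht (j + 2) hj)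
      (by rw [hstep j (by omega)]; exact hpos) (by rw [hstep j (by omega), hstep (j + 1) hj])
  have hspan := mul_sub_one_le_two_mul_sub (t := fun j => (t j : ℤ)) (m := m)
    (fun j hj => by exact_mod_cast hmono j hj)
    fun j hj => by
      have := hconc j hj
      have := hmono j (by omega)
      have := hmono (j + 1) hj
      omega
  have hlast : t (m - 1) < n := ht (m - 1) (by omega)
  have : (t (m - 1) : ℤ) ≤ n - 1 := by omega
  linarith [Int.natCast_nonneg (t 0)]

end ConvexSequence

theorem List.SortedLT.strictMonoOn_getD {α : Type*} [Preorder α] {l : List α} (h : l.SortedLT)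
    (d : α) : StrictMonoOn (l.getD · d) (Set.Iio l.length) := fun i hi j hj hij => by
  rw [Set.mem_Iio] at hi hj
  simp only [List.getD_eq_getElem _ _ hi, List.getD_eq_getElem _ _ hj]
  exact List.sortedLT_iff_getElem_lt_getElem_of_lt.1 h hij

theorem List.mem_image_getD_Iio {α : Type*} {l : List α} {x : α} (hx : x ∈ l) (d : α) :
    x ∈ (l.getD · d) '' Set.Iio l.length := by
  obtain ⟨i, hi, rfl⟩ := List.mem_iff_getElem.1 hx
  exact ⟨i, hi, List.getD_eq_getElem _ _ hi⟩

theorem IsConvexSet.strictMonoOn_fwdDiff {A : Finset ℝ} (hA : IsConvexSet A) :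
    StrictMonoOn (Δ_[1] ((A.sort (· ≤ ·)).getD · 0)) (Set.Iio (#A - 1)) :=
  strictMonoOn_of_lt_succ Set.ordConnected_Iio fun i _ _ hi => by
    simp only [Set.mem_Iio, Order.succ_eq_add_one] at hi
    simpa only [fwdDiff, Order.succ_eq_add_one, add_assoc] using hA i (by omega)

theorem le_two_mul_sqrt_of_mul_sub_one_le {m n : ℝ} (hm : 0 ≤ m) (hmn : m ≤ n)
    (h : m * (m - 1) ≤ 2 * (n - 1)) : m ≤ 2 * √n := by
  have : m / 2 ≤ √n := (Real.le_sqrt (by positivity) (by linarith)).2 (by nlinarith)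
  linarith

theorem IsConvexSet.mul_sub_one_le {A : Finset ℝ} (hA : IsConvexSet A) {m : ℕ} {x d : ℝ}
    (hd : d ≠ 0) (hm : 0 < m) (hAP : ∀ j < m, x + j * d ∈ A) :
    (m : ℤ) * (m - 1) ≤ 2 * (#A - 1) := by
  have hlen : (A.sort (· ≤ ·)).length = #A := length_sort _
  have ha := (sortedLT_sort A).strictMonoOn_getD 0
  rw [hlen] at ha
  refine mul_sub_one_le_of_forall_mem_image (x := x) ha hA.strictMonoOn_fwdDiff hd hm fun j hj => ?_
  simpa [hlen] using List.mem_image_getD_Iio ((mem_sort (· ≤ ·)).2 (hAP j hj)) 0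

/-- Any arithmetic progression contained in a convex set `A ⊆ ℝ` has length `O(|A|^{1/2})`. -/
theorem AP_in_convex_set_short :
    ∃ C : ℝ, 0 < C ∧ ∀ A : Finset ℝ, IsConvexSet A →
      ∀ P : Finset ℝ, P ⊆ A → (∃ m : ℕ, IsAPOfLength P m) →
        (P.card : ℝ) ≤ C * (A.card : ℝ) ^ (1 / 2 : ℝ) := by
  refine ⟨2, two_pos, ?_⟩
  rintro A hA _ hPA ⟨m, x, d, hd, rfl⟩
  have hinj : Function.Injective fun i : ℕ => x + i * d := fun i j h => by simpa [hd] using h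
  have hmA : m ≤ #A := by simpa [card_image_of_injective _ hinj] using card_le_card hPA
  rw [card_image_of_injective _ hinj, card_range, ← Real.sqrt_eq_rpow]
  rcases m.eq_zero_or_pos with rfl | hm
  · simp
  have hAP : ∀ j < m, x + j * d ∈ A := fun j hj => hPA (mem_image_of_mem _ (mem_range.2 hj))
  exact le_two_mul_sqrt_of_mul_sub_one_le (by positivity) (by exact_mod_cast hmA)
    (by exact_mod_cast hA.mul_sub_one_le hd hm hAP)
end

section
/- Let a < b < c be positive real numbers, let k ≥ 2, and let x₀ < x₁ < ⋯ < x_k be real numbers such that x₁ − x₀ = a, x_i − x_{i−1} = b for all 1 < i < k, and x_k − x_{k−1} = c. Then there exists a finite convex set C ⊂ ℝ with |C| = k + 1 which contains the four points x₀, x₁, x_{k−1}, and x_k. -/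
section IncreasingGaps

variable {y : ℕ → ℝ} {n : ℕ}

lemma lt_succ_of_gaps_strictMono (h01 : y 0 < y 1)
    (hgap : ∀ i, i + 2 ≤ n → y (i + 1) - y i < y (i + 2) - y (i + 1)) :
    ∀ i < n, y i < y (i + 1) := by
  have hfirst : ∀ i < n, y 1 - y 0 ≤ y (i + 1) - y i := by
    intro i hi
    induction i with
    | zero => exact le_rfl
    | succ i ih => exact (ih (by omega)).trans (hgap i (by omega)).le
  intro i hi
  linarith [hfirst i hi]

lemma sort_image_range (hy : ∀ i < n, y i < y (i + 1)) :
    ((Finset.range (n + 1)).image y).sort (· ≤ ·) = (List.range (n + 1)).map y := by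
  have hsorted : ((List.range (n + 1)).map y).Pairwise (· < ·) := by
    rw [← List.isChain_iff_pairwise, List.isChain_map, List.isChain_range_succ]
    exact hy
  have himage : (Finset.range (n + 1)).image y = ((List.range (n + 1)).map y).toFinset := by
    ext; simp
  rw [himage, List.toFinset_sort _ hsorted.nodup]
  exact hsorted.imp le_of_lt

theorem isConvexSet_image_range (h01 : y 0 < y 1)
    (hgap : ∀ i, i + 2 ≤ n → y (i + 1) - y i < y (i + 2) - y (i + 1)) :
    IsConvexSet ((Finset.range (n + 1)).image y) ∧
      ((Finset.range (n + 1)).image y).card = n + 1 := by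
  have hsort := sort_image_range (lt_succ_of_gaps_strictMono h01 hgap)
  have hcard : ((Finset.range (n + 1)).image y).card = n + 1 := by
    rw [← Finset.length_sort (· ≤ ·), hsort, List.length_map, List.length_range]
  refine ⟨fun i hi => ?_, hcard⟩
  rw [hcard] at hi
  simp only [hsort, List.getD_eq_getElem?_getD, List.getElem?_map,
    List.getElem?_range (by omega : i < n + 1), List.getElem?_range (by omega : i + 1 < n + 1),
    List.getElem?_range (by omega : i + 2 < n + 1), Option.map_some, Option.getD_some]
  exact hgap i (by omega)

end IncreasingGaps

noncomputable def bendInterior (x : ℕ → ℝ) (k : ℕ) (ε : ℝ) (i : ℕ) : ℝ :=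
  if i = 0 ∨ k ≤ i then x i else x i + ε * ((i : ℝ) - 1) * ((i : ℝ) + 1 - k)

section Bend

variable (x : ℕ → ℝ) (k : ℕ) (ε : ℝ)

lemma bendInterior_zero : bendInterior x k ε 0 = x 0 := by
  simp [bendInterior]

lemma bendInterior_of_le {i : ℕ} (h : k ≤ i) : bendInterior x k ε i = x i := by
  simp [bendInterior, h]

lemma bendInterior_one : bendInterior x k ε 1 = x 1 := by
  simp [bendInterior]

lemma bendInterior_pred : bendInterior x k ε (k - 1) = x (k - 1) := by
  unfold bendInterior
  split_ifs with h
  · rfl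
  · rw [Nat.cast_pred (by omega)]
    ring

lemma bendInterior_succ_sub {i : ℕ} (hi : 0 < i) (hik : i + 1 < k) :
    bendInterior x k ε (i + 1) - bendInterior x k ε i
      = x (i + 1) - x i + ε * (2 * i - k + 1) := by
  simp only [bendInterior, if_neg (show ¬(i + 1 = 0 ∨ k ≤ i + 1) by omega),
    if_neg (show ¬(i = 0 ∨ k ≤ i) by omega)]
  push_cast
  ring

end Bend

theorem bendInterior_gaps_strictMono {x : ℕ → ℝ} {k : ℕ} {a b c ε : ℝ}
    (hε : 0 < ε) (hac : a < c) (hεa : ε * (k - 3) < b - a) (hεc : ε * (k - 3) < c - b)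
    (hfirst : x 1 - x 0 = a) (hmid : ∀ i, 1 < i → i < k → x i - x (i - 1) = b)
    (hlast : x k - x (k - 1) = c) {i : ℕ} (hi : i + 2 ≤ k) :
    bendInterior x k ε (i + 1) - bendInterior x k ε i
      < bendInterior x k ε (i + 2) - bendInterior x k ε (i + 1) := by
  have first_gap : bendInterior x k ε 1 - bendInterior x k ε 0 = a := by
    rw [bendInterior_one, bendInterior_zero, hfirst]
  have middle_gap : ∀ j, 0 < j → j + 1 < k →
      bendInterior x k ε (j + 1) - bendInterior x k ε j = b + ε * (2 * j - k + 1) := by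
    intro j hj hjk
    have hx := hmid (j + 1) (by omega) hjk
    rw [Nat.add_sub_cancel] at hx
    rw [bendInterior_succ_sub x k ε hj hjk, hx]
  rcases hi.eq_or_lt with rfl | hk
  · have last_gap : bendInterior x (i + 2) ε (i + 2) - bendInterior x (i + 2) ε (i + 1) = c := by
      rw [bendInterior_of_le x _ ε le_rfl, ← Nat.add_sub_cancel (i + 1) 1,
        bendInterior_pred, hlast]
    rw [last_gap]
    rcases Nat.eq_zero_or_pos i with rfl | hi0
    · rwa [first_gap]
    · rw [middle_gap i hi0 (by omega)]
      push_cast at hεc ⊢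
      linarith
  · rcases Nat.eq_zero_or_pos i with rfl | hi0
    · rw [first_gap, middle_gap 1 one_pos hk]
      push_cast
      linarith
    · rw [middle_gap i hi0 (by omega), middle_gap (i + 1) (by omega) hk]
      push_cast
      linarith

theorem convexify_almost_AP_general (a b c : ℝ) (ha : 0 < a) (hab : a < b) (hbc : b < c)
    (k : ℕ) (hk : 2 ≤ k) (x : ℕ → ℝ)
    (hfirst : x 1 - x 0 = a)
    (hmid : ∀ i, 1 < i → i < k → x i - x (i - 1) = b)
    (hlast : x k - x (k - 1) = c) :
    ∃ C : Finset ℝ, IsConvexSet C ∧ C.card = k + 1 ∧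
      x 0 ∈ C ∧ x 1 ∈ C ∧ x (k - 1) ∈ C ∧ x k ∈ C := by
  set ε := min (b - a) (c - b) / k
  have hk0 : (0 : ℝ) < k := by positivity
  have hε : 0 < ε := div_pos (lt_min (by linarith) (by linarith)) hk0
  have hεk : ε * k = min (b - a) (c - b) := div_mul_cancel₀ _ hk0.ne'
  have hεa : ε * (k - 3) < b - a := by linarith [min_le_left (b - a) (c - b)]
  have hεc : ε * (k - 3) < c - b := by linarith [min_le_right (b - a) (c - b)]
  obtain ⟨hconvex, hcard⟩ := isConvexSet_image_range (y := bendInterior x k ε) (n := k)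
    (by linarith [bendInterior_zero x k ε, bendInterior_one x k ε])
    (fun i hi => bendInterior_gaps_strictMono hε (hab.trans hbc) hεa hεc hfirst hmid hlast hi)
  refine ⟨_, hconvex, hcard, ?_, ?_, ?_, ?_⟩ <;> rw [Finset.mem_image]
  · exact ⟨0, by simp, bendInterior_zero x k ε⟩
  · exact ⟨1, by simp only [Finset.mem_range]; omega, bendInterior_one x k ε⟩
  · exact ⟨k - 1, by simp only [Finset.mem_range]; omega, bendInterior_pred x k ε⟩
  · exact ⟨k, by simp, bendInterior_of_le x k ε le_rfl⟩

/-- If `x₀ < x₁ < ⋯ < x_k` have gaps `a, b, …, b, c` with `0 < a < b < c`, then there is a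
convex set of size `k + 1` containing `x₀`, `x₁`, `x_{k−1}` and `x_k`. -/
theorem convexify_almost_AP (a b c : ℝ) (ha : 0 < a) (hab : a < b) (hbc : b < c)
    (k : ℕ) (hk : 2 ≤ k) (x : ℕ → ℝ)
    (hmono : ∀ i < k, x i < x (i + 1))
    (hfirst : x 1 - x 0 = a)
    (hmid : ∀ i, 1 < i → i < k → x i - x (i - 1) = b)
    (hlast : x k - x (k - 1) = c) :
    ∃ C : Finset ℝ, IsConvexSet C ∧ C.card = k + 1 ∧
      x 0 ∈ C ∧ x 1 ∈ C ∧ x (k - 1) ∈ C ∧ x k ∈ C :=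
  convexify_almost_AP_general a b c ha hab hbc k hk x hfirst hmid hlast
end

section
/- There exists an absolute constant c > 0 such that for every natural number N there is a finite convex set A ⊂ ℝ with |A| ≥ N and a real number x with r_{A+A}(x) ≥ c·|A|^{2/3}, where r_{A+A}(x) := #{(a,b) ∈ A × A : a + b = x}. -/
open Finset

section PrefixSums

variable {α : Type*}

theorem pairwise_map_sum_inits [AddCommMonoid α] [PartialOrder α] [IsOrderedCancelAddMonoid α]
    {d : List α} (hd : ∀ x ∈ d, 0 < x) :
    (d.inits.map List.sum).Pairwise (· < ·) := by
  induction d with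
  | nil => simp
  | cons a d ih =>
    simp only [List.forall_mem_cons] at hd
    rw [List.inits_cons, List.map_cons, List.pairwise_cons, List.map_map, List.pairwise_map]
    refine ⟨?_, (List.pairwise_map.1 (ih hd.2)).imp fun h => by simpa using h⟩
    simp only [List.mem_map, List.mem_inits, Function.comp_apply, List.sum_cons, List.sum_nil]
    rintro _ ⟨l, hl, rfl⟩
    exact add_pos_of_pos_of_nonneg hd.1 (List.sum_nonneg fun x hx => (hd.2 x (hl.subset hx)).le)

variable [DecidableEq α]

def prefixSums [AddMonoid α] (d : List α) : Finset α :=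
  (d.inits.map List.sum).toFinset

section AddMonoid

variable [AddMonoid α]

theorem mem_prefixSums {d : List α} {x : α} : x ∈ prefixSums d ↔ ∃ l, l <+: d ∧ l.sum = x := by
  simp [prefixSums, List.mem_inits]

theorem prefixSums_subset_append (d₁ d₂ : List α) : prefixSums d₁ ⊆ prefixSums (d₁ ++ d₂) := by
  intro x hx
  obtain ⟨l, hl, rfl⟩ := mem_prefixSums.1 hx
  exact mem_prefixSums.2 ⟨l, hl.trans (List.prefix_append _ _), rfl⟩

theorem add_mem_prefixSums_append {d₁ d₂ : List α} {y : α} (hy : y ∈ prefixSums d₂) :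
    d₁.sum + y ∈ prefixSums (d₁ ++ d₂) := by
  obtain ⟨l, hl, rfl⟩ := mem_prefixSums.1 hy
  exact mem_prefixSums.2 ⟨d₁ ++ l, (List.prefix_append_right_inj d₁).2 hl, List.sum_append⟩

theorem mem_prefixSums_flatten {L : List (List α)} {y : α}
    (hy : y ∈ prefixSums (L.map List.sum)) : y ∈ prefixSums L.flatten := by
  obtain ⟨l, hl, rfl⟩ := mem_prefixSums.1 hy
  rw [List.prefix_iff_eq_take.1 hl, ← List.map_take, ← List.sum_flatten]
  exact mem_prefixSums.2 ⟨_, (List.take_prefix _ L).flatten, rfl⟩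

end AddMonoid

theorem sum_sub_mem_prefixSums_reverse [AddCommGroup α] {s : List α} {y : α}
    (hy : y ∈ prefixSums s) : s.sum - y ∈ prefixSums s.reverse := by
  obtain ⟨l, ⟨t, rfl⟩, rfl⟩ := mem_prefixSums.1 hy
  refine mem_prefixSums.2 ⟨t.reverse, ?_, by simp⟩
  rw [List.reverse_append]
  exact List.prefix_append _ _

variable [AddCommGroup α] [LinearOrder α] [IsOrderedAddMonoid α]

theorem sort_prefixSums {d : List α} (hd : ∀ x ∈ d, 0 < x) :
    (prefixSums d).sort (· ≤ ·) = d.inits.map List.sum :=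
  (List.toFinset_sort _ (pairwise_map_sum_inits hd).nodup).2
    ((pairwise_map_sum_inits hd).imp le_of_lt)

theorem card_prefixSums {d : List α} (hd : ∀ x ∈ d, 0 < x) :
    #(prefixSums d) = d.length + 1 := by
  rw [← length_sort (· ≤ ·), sort_prefixSums hd, List.length_map, List.length_inits]

theorem length_add_one_le_card_filter_add_eq {U V : List (List α)} (hU : ∀ l ∈ U, 0 < l.sum)
    (hUV : V.map List.sum = (U.map List.sum).reverse) :
    U.length + 1 ≤ #(((prefixSums (U.flatten ++ V.flatten)) ×ˢ
      prefixSums (U.flatten ++ V.flatten)).filter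
        fun p => p.1 + p.2 = U.flatten.sum + U.flatten.sum) := by
  have hpos : ∀ x ∈ U.map List.sum, 0 < x := by simpa using hU
  rw [← List.length_map List.sum, ← card_prefixSums hpos]
  refine card_le_card_of_injOn (fun y => (y, U.flatten.sum + (U.flatten.sum - y))) ?_ ?_
  · intro y hy
    have hV : U.flatten.sum - y ∈ prefixSums V.flatten := by
      refine mem_prefixSums_flatten ?_
      rw [hUV, List.sum_flatten]
      exact sum_sub_mem_prefixSums_reverse hy
    simp only [coe_filter, mem_product, Set.mem_ofPred_eq]
    exact ⟨⟨prefixSums_subset_append _ _ (mem_prefixSums_flatten hy),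
      add_mem_prefixSums_append hV⟩, by abel⟩
  · intro y _ z _ h
    exact congrArg Prod.fst h

end PrefixSums

theorem isConvexSet_prefixSums {d : List ℝ} (hpos : ∀ x ∈ d, 0 < x)
    (hd : d.Pairwise (· < ·)) : IsConvexSet (prefixSums d) := by
  intro i hi
  rw [card_prefixSums hpos] at hi
  rw [sort_prefixSums hpos]
  have hchain := List.isChain_iff_getElem.1 hd.isChain i (by omega)
  rw [List.getD_eq_getElem _ _ (by simp; omega), List.getD_eq_getElem _ _ (by simp; omega),
    List.getD_eq_getElem _ _ (by simp; omega)]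
  simp only [List.getElem_map, List.getElem_inits, List.sum_take_succ _ _ (by omega : i < d.length),
    List.sum_take_succ _ _ (by omega : i + 1 < d.length)]
  linarith

section Block

variable {K : Type*} [Field K]

def block (ε c : K) (n : ℕ) : List K :=
  (List.range n).map fun i : ℕ => c + ε * (2 * (i : K) - (n - 1))

theorem length_block (ε c : K) (n : ℕ) : (block ε c n).length = n := by
  simp [block]

theorem sum_block (ε c : K) (n : ℕ) : (block ε c n).sum = n * c := by
  have hgauss : ∑ i ∈ range n, 2 * (i : K) = n * (n - 1) := by
    induction n with
    | zero => simp
    | succ n ih => rw [sum_range_succ, ih]; push_cast; ring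
  change ∑ i ∈ range n, (c + ε * (2 * (i : K) - (n - 1))) = n * c
  rw [sum_add_distrib, ← mul_sum, sum_sub_distrib, hgauss]
  simp only [sum_const, card_range, nsmul_eq_mul]
  ring

variable [LinearOrder K] [IsStrictOrderedRing K]

theorem pairwise_block {ε : K} (hε : 0 < ε) (c : K) (n : ℕ) :
    (block ε c n).Pairwise (· < ·) :=
  List.pairwise_map.2 <| List.pairwise_lt_range.imp fun {i j} h => by
    have : (i : K) < j := by exact_mod_cast h
    simp only [add_lt_add_iff_left, mul_lt_mul_iff_right₀ hε]
    linarith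

theorem abs_sub_le_of_mem_block {ε c x : K} {n : ℕ} (hε : 0 ≤ ε) (hx : x ∈ block ε c n) :
    |x - c| ≤ ε * n := by
  obtain ⟨i, hi, rfl⟩ := List.mem_map.1 hx
  have hi : (i : K) + 1 ≤ n := by exact_mod_cast List.mem_range.1 hi
  rw [add_sub_cancel_left, abs_mul, abs_of_nonneg hε]
  gcongr
  rw [abs_le]
  constructor <;> linarith [(Nat.cast_nonneg i : (0 : K) ≤ (i : K))]

theorem pairwise_flatten_block {ε : K} (hε : 0 < ε) {M : ℕ} {bs : List (K × ℕ)}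
    (hM : ∀ b ∈ bs, b.2 ≤ M) (hbs : bs.Pairwise fun b b' => b.1 + 2 * ε * M < b'.1) :
    (bs.map fun b => block ε b.1 b.2).flatten.Pairwise (· < ·) := by
  refine List.pairwise_flatten.2 ⟨?_, List.pairwise_map.2 (hbs.imp_of_mem ?_)⟩
  · simp only [List.mem_map]
    rintro _ ⟨b, _, rfl⟩
    exact pairwise_block hε _ _
  · intro b b' hb hb' hlt x hx y hy
    have hx' := abs_le.1 ((abs_sub_le_of_mem_block hε.le hx).trans
      (mul_le_mul_of_nonneg_left (Nat.cast_le.2 (hM b hb)) hε.le))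
    have hy' := abs_le.1 ((abs_sub_le_of_mem_block hε.le hy).trans
      (mul_le_mul_of_nonneg_left (Nat.cast_le.2 (hM b' hb')) hε.le))
    linarith

end Block

section CoprimePairs

def lowerPairs (m : ℕ) : Finset (ℕ × ℕ) :=
  (Icc 1 m ×ˢ Icc 1 m).filter fun p => p.2 < p.1

def coprimePairs (m : ℕ) : Finset (ℕ × ℕ) :=
  (lowerPairs m).filter fun p => p.1.Coprime p.2

theorem mem_lowerPairs {m : ℕ} {p : ℕ × ℕ} :
    p ∈ lowerPairs m ↔ 1 ≤ p.2 ∧ p.2 < p.1 ∧ p.1 ≤ m := by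
  simp only [lowerPairs, mem_filter, mem_product, mem_Icc]
  omega

theorem lowerPairs_succ (m : ℕ) :
    lowerPairs (m + 1) = lowerPairs m ∪ (Icc 1 m).image fun b => (m + 1, b) := by
  ext ⟨a, b⟩
  simp only [mem_union, mem_image, mem_lowerPairs, mem_Icc, Prod.mk.injEq]
  constructor
  · intro h
    by_cases ha : a = m + 1
    · exact Or.inr ⟨b, by omega, ha.symm, rfl⟩
    · exact Or.inl (by omega)
  · rintro (h | ⟨b, hb, rfl, rfl⟩) <;> omega

theorem card_lowerPairs (m : ℕ) : (#(lowerPairs m) : ℝ) = ((m : ℝ) ^ 2 - m) / 2 := by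
  induction m with
  | zero => simp [lowerPairs]
  | succ m ih =>
    rw [lowerPairs_succ, card_union_of_disjoint,
      card_image_of_injective _ fun _ _ h => (Prod.mk.inj h).2, Nat.card_Icc]
    · push_cast [ih]
      ring
    · rw [disjoint_left]
      rintro ⟨a, b⟩ h
      simp only [mem_image, mem_lowerPairs, Prod.mk.injEq, not_exists, not_and] at h ⊢
      omega

theorem card_filter_not_coprime_le (m : ℕ) :
    #((lowerPairs m).filter fun p => ¬ p.1.Coprime p.2) ≤
      ∑ g ∈ Icc 2 m, #(lowerPairs (m / g)) := by
  refine (card_le_card ?_).trans (card_biUnion_le.trans (sum_le_sum fun g _ =>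
    card_image_le (f := fun p : ℕ × ℕ => (g * p.1, g * p.2))))
  rintro ⟨a, b⟩ hp
  simp only [mem_filter, mem_lowerPairs] at hp
  obtain ⟨⟨hb, hba, ham⟩, hcop⟩ := hp
  obtain ⟨g, a', b', hg, hcop', rfl, rfl⟩ := Nat.exists_coprime' (Nat.gcd_pos_of_pos_right a hb)
  have hg2 : 2 ≤ g := by
    by_contra h
    obtain rfl : g = 1 := by omega
    simp_all
  have hb' : 1 ≤ b' := Nat.pos_of_mul_pos_right hb
  have hba' : b' < a' := Nat.lt_of_mul_lt_mul_right hba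
  simp only [mem_biUnion, mem_Icc, mem_image, mem_lowerPairs, Prod.mk.injEq]
  refine ⟨g, ⟨hg2, le_trans (Nat.le_mul_of_pos_left g (by omega)) ham⟩, (a', b'),
    ⟨hb', hba', (Nat.le_div_iff_mul_le hg).2 ham⟩, mul_comm _ _, mul_comm _ _⟩

theorem sum_Icc_inv_sq_le {m : ℕ} (hm : 2 ≤ m) :
    ∑ g ∈ Icc 2 m, 1 / (g : ℝ) ^ 2 ≤ 3 / 4 - 1 / (m : ℝ) := by
  induction m, hm using Nat.le_induction with
  | base => norm_num
  | succ m hm ih =>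
    have hm' : (2 : ℝ) ≤ m := by exact_mod_cast hm
    have htel : 1 / ((m : ℝ) + 1) ^ 2 ≤ 1 / m - 1 / (m + 1) := by
      rw [div_sub_div _ _ (by positivity) (by positivity),
        div_le_div_iff₀ (by positivity) (by positivity)]
      nlinarith
    rw [sum_Icc_succ_top (by omega)]
    push_cast
    linarith

theorem card_coprimePairs {m : ℕ} (hm : 2 ≤ m) : (m : ℝ) ^ 2 / 8 ≤ #(coprimePairs m) := by
  have hsplit := card_filter_add_card_filter_not (s := lowerPairs m) fun p => p.1.Coprime p.2
  have hbad : (#((lowerPairs m).filter fun p => ¬ p.1.Coprime p.2) : ℝ) ≤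
      ∑ g ∈ Icc 2 m, (m : ℝ) ^ 2 / 2 * (1 / (g : ℝ) ^ 2) := by
    refine (Nat.cast_le.2 (card_filter_not_coprime_le m)).trans ?_
    push_cast
    refine sum_le_sum fun g hg => ?_
    have hg : (0 : ℝ) < g := by have := (mem_Icc.1 hg).1; positivity
    have hdiv : ((m / g : ℕ) : ℝ) ≤ m / g := Nat.cast_div_le
    rw [card_lowerPairs]
    have : ((m / g : ℕ) : ℝ) ^ 2 ≤ (m / g) ^ 2 := pow_le_pow_left₀ (Nat.cast_nonneg _) hdiv 2
    calc (((m / g : ℕ) : ℝ) ^ 2 - (m / g : ℕ)) / 2 ≤ ((m : ℝ) / g) ^ 2 / 2 := by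
          linarith [(Nat.cast_nonneg _ : (0 : ℝ) ≤ (m / g : ℕ))]
      _ = (m : ℝ) ^ 2 / 2 * (1 / (g : ℝ) ^ 2) := by ring
  rw [← mul_sum] at hbad
  have hsum :=
    mul_le_mul_of_nonneg_left (sum_Icc_inv_sq_le hm) (by positivity : (0 : ℝ) ≤ m ^ 2 / 2)
  have hcast : (#(coprimePairs m) : ℝ) + #((lowerPairs m).filter fun p => ¬ p.1.Coprime p.2) =
      ((m : ℝ) ^ 2 - m) / 2 := by
    rw [← card_lowerPairs, ← hsplit]
    push_cast
    rfl
  have : (m : ℝ) ^ 2 / 2 * (3 / 4 - 1 / m) = 3 / 8 * m ^ 2 - m / 2 := by field_simp; ring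
  linarith

end CoprimePairs

section Slopes

/-- `coprimePairs m` ordered by the slope `a / b`: sorted in `ℚ`, then recovered as `(num, den)`. -/
def slopes (m : ℕ) : List (ℕ × ℕ) :=
  (((coprimePairs m).image fun p => (p.1 : ℚ) / p.2).sort (· ≤ ·)).map
    fun σ => (σ.num.toNat, σ.den)

theorem num_den_div_of_mem_coprimePairs {m : ℕ} {p : ℕ × ℕ} (hp : p ∈ coprimePairs m) :
    (((p.1 : ℚ) / p.2).num.toNat, ((p.1 : ℚ) / p.2).den) = p := by
  obtain ⟨a, b⟩ := p
  obtain ⟨hlow, hcop⟩ := mem_filter.1 hp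
  have hb : (0 : ℤ) < b := by exact_mod_cast (mem_lowerPairs.1 hlow).1
  have hnum := Rat.num_div_eq_of_coprime (a := a) hb (by simpa using hcop)
  have hden := Rat.den_div_eq_of_coprime (a := a) hb (by simpa using hcop)
  push_cast at hnum hden
  simp [hnum, Int.ofNat_inj.1 hden]

theorem mem_slopes {m : ℕ} {p : ℕ × ℕ} (hp : p ∈ slopes m) : p ∈ coprimePairs m := by
  obtain ⟨σ, hσ, rfl⟩ := List.mem_map.1 hp
  obtain ⟨q, hq, rfl⟩ := mem_image.1 ((mem_sort _).1 hσ)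
  rwa [num_den_div_of_mem_coprimePairs hq]

theorem length_slopes (m : ℕ) : (slopes m).length = #(coprimePairs m) := by
  rw [slopes, List.length_map, length_sort,
    card_image_of_injOn (Set.LeftInvOn.injOn (f₁' := fun σ : ℚ => (σ.num.toNat, σ.den))
      fun _ hp => num_den_div_of_mem_coprimePairs hp)]

theorem pairwise_slopes (m : ℕ) :
    (slopes m).Pairwise fun p q => p.1 * q.2 < q.1 * p.2 := by
  rw [slopes, List.pairwise_map]
  refine (sortedLT_sort _).pairwise.imp_of_mem fun hσ hτ hlt => ?_
  obtain ⟨p, hp, rfl⟩ := mem_image.1 ((mem_sort _).1 hσ)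
  obtain ⟨q, hq, rfl⟩ := mem_image.1 ((mem_sort _).1 hτ)
  rw [num_den_div_of_mem_coprimePairs hp, num_den_div_of_mem_coprimePairs hq]
  have hp2 : (0 : ℚ) < p.2 := by exact_mod_cast (mem_lowerPairs.1 (mem_filter.1 hp).1).1
  have hq2 : (0 : ℚ) < q.2 := by exact_mod_cast (mem_lowerPairs.1 (mem_filter.1 hq).1).1
  rw [div_lt_div_iff₀ hp2 hq2] at hlt
  exact_mod_cast hlt

theorem exists_sorted_coprime_pairs {m : ℕ} (hm : 2 ≤ m) :
    ∃ ps : List (ℕ × ℕ), (∀ p ∈ ps, p ∈ lowerPairs m) ∧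
      ps.Pairwise (fun p q => p.1 * q.2 < q.1 * p.2) ∧ (m : ℝ) ^ 2 / 8 ≤ ps.length :=
  ⟨slopes m, fun _ hp => (mem_filter.1 (mem_slopes hp)).1, pairwise_slopes m,
    length_slopes m ▸ card_coprimePairs hm⟩

end Slopes

noncomputable section Construction

def leftCenter (p : ℕ × ℕ) : ℝ := 2 * p.2 / (p.1 + p.2)

def rightCenter (p : ℕ × ℕ) : ℝ := 2 * p.1 / (p.1 + p.2)

variable {m : ℕ} {p q : ℕ × ℕ}

theorem cast_bounds_of_mem_lowerPairs (hp : p ∈ lowerPairs m) :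
    (1 : ℝ) ≤ p.2 ∧ (p.2 : ℝ) + 1 ≤ p.1 ∧ (p.1 : ℝ) ≤ m := by
  obtain ⟨h1, h2, h3⟩ := mem_lowerPairs.1 hp
  exact ⟨by exact_mod_cast h1, by exact_mod_cast h2, by exact_mod_cast h3⟩

theorem leftCenter_add_le_leftCenter (hp : p ∈ lowerPairs m) (hq : q ∈ lowerPairs m)
    (hpq : p.1 * q.2 < q.1 * p.2) : leftCenter q + 1 / (2 * m ^ 2) ≤ leftCenter p := by
  have hdet : (1 : ℝ) ≤ q.1 * p.2 - p.1 * q.2 := by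
    have : ((p.1 * q.2 + 1 : ℕ) : ℝ) ≤ (q.1 * p.2 : ℕ) := by exact_mod_cast hpq
    push_cast at this
    linarith
  obtain ⟨hp2, hp21, hp1⟩ := cast_bounds_of_mem_lowerPairs hp
  obtain ⟨hq2, hq21, hq1⟩ := cast_bounds_of_mem_lowerPairs hq
  calc leftCenter q + 1 / (2 * m ^ 2)
      = leftCenter q + 2 * 1 / ((2 * m) * (2 * m)) := by field_simp
    _ ≤ leftCenter q + 2 * (q.1 * p.2 - p.1 * q.2) / ((p.1 + p.2) * (q.1 + q.2)) := by
      gcongr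
      · nlinarith
      · linarith
    _ = leftCenter p := by
      unfold leftCenter
      field_simp
      ring

theorem rightCenter_eq_two_sub_leftCenter (hp : p ∈ lowerPairs m) :
    rightCenter p = 2 - leftCenter p := by
  obtain ⟨hp2, hp21, -⟩ := cast_bounds_of_mem_lowerPairs hp
  unfold rightCenter leftCenter
  field_simp
  ring

theorem leftCenter_add_le_one (hp : p ∈ lowerPairs m) : leftCenter p + 1 / (2 * m ^ 2) ≤ 1 := by
  obtain ⟨hp2, hp21, hp1⟩ := cast_bounds_of_mem_lowerPairs hp
  unfold leftCenter
  have hm : (1 : ℝ) ≤ m := by linarith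
  rw [div_add_div _ _ (by linarith) (by positivity), div_le_one (by positivity)]
  nlinarith

theorem inv_le_leftCenter (hp : p ∈ lowerPairs m) : (m : ℝ)⁻¹ ≤ leftCenter p := by
  obtain ⟨hp2, hp21, hp1⟩ := cast_bounds_of_mem_lowerPairs hp
  rw [leftCenter, inv_eq_one_div, div_le_div_iff₀ (by linarith) (by linarith)]
  nlinarith

end Construction

noncomputable section SlopeDiffs

variable {m : ℕ} {ps : List (ℕ × ℕ)}

/-- The step `1 / (8 m³)` keeps a block of at most `m` differences within `1 / (8 m²)` of its
centre, less than half the gap `1 / (2 m²)` between consecutive centres. -/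
def blockWidth (m : ℕ) : ℝ := 1 / (8 * m ^ 3)

theorem blockWidth_pos (hm : 0 < m) : 0 < blockWidth m := by
  rw [blockWidth]
  positivity

def slopeBlocks (ps : List (ℕ × ℕ)) : List (ℝ × ℕ) :=
  ps.reverse.map (fun p => (leftCenter p, p.1)) ++ ps.map fun p => (rightCenter p, p.2)

def slopeDiffs (m : ℕ) (ps : List (ℕ × ℕ)) : List ℝ :=
  ((slopeBlocks ps).map fun b => block (blockWidth m) b.1 b.2).flatten

theorem mem_slopeBlocks {b : ℝ × ℕ} (hb : b ∈ slopeBlocks ps) :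
    ∃ p ∈ ps, b = (leftCenter p, p.1) ∨ b = (rightCenter p, p.2) := by
  simp only [slopeBlocks, List.mem_append, List.mem_map, List.mem_reverse] at hb
  rcases hb with ⟨p, hp, rfl⟩ | ⟨p, hp, rfl⟩
  exacts [⟨p, hp, .inl rfl⟩, ⟨p, hp, .inr rfl⟩]

theorem pairwise_slopeBlocks (hps : ∀ p ∈ ps, p ∈ lowerPairs m)
    (hsorted : ps.Pairwise fun p q => p.1 * q.2 < q.1 * p.2) :
    (slopeBlocks ps).Pairwise fun b b' => b.1 + 1 / (2 * (m : ℝ) ^ 2) ≤ b'.1 := by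
  rw [slopeBlocks, List.pairwise_append, List.pairwise_map, List.pairwise_reverse,
    List.pairwise_map]
  refine ⟨hsorted.imp_of_mem fun hp hq hpq =>
      leftCenter_add_le_leftCenter (hps _ hp) (hps _ hq) hpq,
    hsorted.imp_of_mem fun hp hq hpq => ?_, ?_⟩
  · rw [rightCenter_eq_two_sub_leftCenter (hps _ hp), rightCenter_eq_two_sub_leftCenter (hps _ hq)]
    linarith [leftCenter_add_le_leftCenter (hps _ hp) (hps _ hq) hpq]
  · simp only [List.mem_map, List.mem_reverse]
    rintro _ ⟨p, hp, rfl⟩ _ ⟨q, hq, rfl⟩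
    rw [rightCenter_eq_two_sub_leftCenter (hps _ hq)]
    have : (0 : ℝ) ≤ 1 / (2 * m ^ 2) := by positivity
    linarith [leftCenter_add_le_one (hps _ hp), leftCenter_add_le_one (hps _ hq)]

theorem bounds_of_mem_slopeBlocks (hps : ∀ p ∈ ps, p ∈ lowerPairs m) {b : ℝ × ℕ}
    (hb : b ∈ slopeBlocks ps) : (m : ℝ)⁻¹ ≤ b.1 ∧ 1 ≤ b.2 ∧ b.2 ≤ m := by
  obtain ⟨p, hp, rfl | rfl⟩ := mem_slopeBlocks hb <;>
    obtain ⟨h2, h21, h1⟩ := mem_lowerPairs.1 (hps p hp)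
  · exact ⟨inv_le_leftCenter (hps p hp), by omega, h1⟩
  · refine ⟨?_, h2, by omega⟩
    have hm : (1 : ℝ) ≤ m := by exact_mod_cast (by omega : 1 ≤ m)
    have hδ : (0 : ℝ) ≤ 1 / (2 * m ^ 2) := by positivity
    rw [rightCenter_eq_two_sub_leftCenter (hps p hp)]
    linarith [leftCenter_add_le_one (hps p hp), inv_le_one_of_one_le₀ hm]

theorem pairwise_slopeDiffs (hm : 0 < m) (hps : ∀ p ∈ ps, p ∈ lowerPairs m)
    (hsorted : ps.Pairwise fun p q => p.1 * q.2 < q.1 * p.2) :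
    (slopeDiffs m ps).Pairwise (· < ·) := by
  refine pairwise_flatten_block (M := m) (blockWidth_pos hm)
    (fun b hb => (bounds_of_mem_slopeBlocks hps hb).2.2)
    ((pairwise_slopeBlocks hps hsorted).imp fun h => lt_of_lt_of_le ?_ h)
  have : 2 * blockWidth m * m < 1 / (2 * m ^ 2) := by
    rw [blockWidth]
    field_simp
    norm_num
  linarith

theorem pos_of_mem_slopeDiffs (hm : 0 < m) (hps : ∀ p ∈ ps, p ∈ lowerPairs m) {x : ℝ}
    (hx : x ∈ slopeDiffs m ps) : 0 < x := by
  obtain ⟨l, hl, hxl⟩ := List.mem_flatten.1 hx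
  obtain ⟨b, hb, rfl⟩ := List.mem_map.1 hl
  obtain ⟨hb1, -, hb2⟩ := bounds_of_mem_slopeBlocks hps hb
  have hm' : (1 : ℝ) ≤ m := by exact_mod_cast hm
  have hx := abs_le.1 (abs_sub_le_of_mem_block (blockWidth_pos hm).le hxl)
  have : blockWidth m * b.2 < (m : ℝ)⁻¹ := by
    calc blockWidth m * b.2 ≤ blockWidth m * m := by gcongr; exact (blockWidth_pos hm).le
      _ < (m : ℝ)⁻¹ := by rw [blockWidth]; field_simp; linarith
  linarith

theorem length_slopeBlocks (ps : List (ℕ × ℕ)) : (slopeBlocks ps).length = 2 * ps.length := by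
  simp [slopeBlocks, two_mul]

theorem length_slopeDiffs (m : ℕ) (ps : List (ℕ × ℕ)) :
    (slopeDiffs m ps).length = ((slopeBlocks ps).map Prod.snd).sum := by
  simp [slopeDiffs, List.length_flatten, Function.comp_def, length_block]

theorem length_slopeDiffs_le (hps : ∀ p ∈ ps, p ∈ lowerPairs m) :
    (slopeDiffs m ps).length ≤ 2 * ps.length * m := by
  rw [length_slopeDiffs, ← length_slopeBlocks, ← List.length_map (f := Prod.snd)]
  refine List.sum_le_card_nsmul _ _ fun n hn => ?_
  obtain ⟨b, hb, rfl⟩ := List.mem_map.1 hn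
  exact (bounds_of_mem_slopeBlocks hps hb).2.2

theorem two_mul_length_le_length_slopeDiffs (hps : ∀ p ∈ ps, p ∈ lowerPairs m) :
    2 * ps.length ≤ (slopeDiffs m ps).length := by
  rw [length_slopeDiffs, ← length_slopeBlocks, ← List.length_map (f := Prod.snd)]
  refine List.length_le_sum_of_one_le _ fun n hn => ?_
  obtain ⟨b, hb, rfl⟩ := List.mem_map.1 hn
  exact (bounds_of_mem_slopeBlocks hps hb).2.1

theorem slopeDiffs_eq (m : ℕ) (ps : List (ℕ × ℕ)) :
    slopeDiffs m ps =
      (ps.reverse.map fun p => block (blockWidth m) (leftCenter p) p.1).flatten ++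
        (ps.map fun p => block (blockWidth m) (rightCenter p) p.2).flatten := by
  simp [slopeDiffs, slopeBlocks, Function.comp_def]

theorem exists_length_add_one_le_card_filter_add_eq (hps : ∀ p ∈ ps, p ∈ lowerPairs m) :
    ∃ x : ℝ, ps.length + 1 ≤ #(((prefixSums (slopeDiffs m ps)) ×ˢ
      prefixSums (slopeDiffs m ps)).filter fun p => p.1 + p.2 = x) := by
  rw [slopeDiffs_eq]
  have hU : ∀ l ∈ ps.reverse.map fun p => block (blockWidth m) (leftCenter p) p.1,
      0 < l.sum := by
    simp only [List.mem_map, List.mem_reverse]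
    rintro _ ⟨p, hp, rfl⟩
    obtain ⟨hp2, hp21, -⟩ := cast_bounds_of_mem_lowerPairs (hps p hp)
    rw [sum_block, leftCenter]
    exact mul_pos (by linarith) (div_pos (by linarith) (by linarith))
  have hUV := length_add_one_le_card_filter_add_eq hU
      (V := ps.map fun p => block (blockWidth m) (rightCenter p) p.2) (by
    simp only [List.map_map, List.map_reverse, List.reverse_reverse]
    refine List.map_congr_left fun p _ => ?_
    simp only [Function.comp_apply, sum_block, leftCenter, rightCenter]
    ring)
  rw [List.length_map, List.length_reverse] at hUV
  exact ⟨_, hUV⟩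

end SlopeDiffs

theorem rpow_two_div_three_le {x y : ℝ} (hx : 0 ≤ x) (hy : 0 ≤ y) (h : x ^ 2 ≤ y ^ 3) :
    x ^ (2 / 3 : ℝ) ≤ y := by
  rw [← pow_le_pow_iff_left₀ (by positivity) hy three_ne_zero, ← Real.rpow_natCast,
    ← Real.rpow_mul hx]
  norm_num
  exact h

theorem add_one_rpow_two_div_three_le {n k m : ℝ} (hn : 0 ≤ n) (hm : 8 ≤ m)
    (hk : m ^ 2 / 8 ≤ k) (hnk : n ≤ 2 * k * m) : (n + 1) ^ (2 / 3 : ℝ) ≤ 5 * k := by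
  have hkm : 1 ≤ k * m := by nlinarith
  refine rpow_two_div_three_le (by positivity) (by nlinarith) ?_
  calc (n + 1) ^ 2 ≤ (3 * k * m) ^ 2 := by gcongr; linarith
    _ = 9 * k ^ 2 * m ^ 2 := by ring
    _ ≤ 9 * k ^ 2 * (8 * k) := by gcongr; linarith
    _ ≤ (5 * k) ^ 3 := by nlinarith

/-- There are arbitrarily large convex sets `A ⊆ ℝ` and reals `x` with
`r_{A+A}(x) ≥ c·|A|^{2/3}`, where `r_{A+A}(x) = #{(a,b) ∈ A × A : a + b = x}`. -/
theorem convex_set_with_popular_sum :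
    ∃ c : ℝ, 0 < c ∧ ∀ N : ℕ, ∃ A : Finset ℝ,
      IsConvexSet A ∧ N ≤ A.card ∧ ∃ x : ℝ,
        c * (A.card : ℝ) ^ (2 / 3 : ℝ) ≤
          (((A ×ˢ A).filter fun p => p.1 + p.2 = x).card : ℝ) := by
  refine ⟨1 / 5, by norm_num, fun N => ?_⟩
  obtain ⟨ps, hps, hsorted, hK⟩ := exists_sorted_coprime_pairs (by omega : 2 ≤ N + 8)
  have hm : (8 : ℝ) ≤ (N + 8 : ℕ) := by exact_mod_cast (by omega : 8 ≤ N + 8)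
  have hpos : ∀ x ∈ slopeDiffs (N + 8) ps, 0 < x := fun _ => pos_of_mem_slopeDiffs (by omega) hps
  obtain ⟨x, hx⟩ := exists_length_add_one_le_card_filter_add_eq hps
  refine ⟨prefixSums (slopeDiffs (N + 8) ps),
    isConvexSet_prefixSums hpos (pairwise_slopeDiffs (by omega) hps hsorted), ?_, x, ?_⟩
  · have : N + 8 ≤ ps.length := (Nat.cast_le (α := ℝ)).1 (by nlinarith)
    have := two_mul_length_le_length_slopeDiffs hps
    rw [card_prefixSums hpos]
    omega
  · have hA := add_one_rpow_two_div_three_le (Nat.cast_nonneg _) hm hK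
      (by exact_mod_cast length_slopeDiffs_le hps)
    rw [card_prefixSums hpos, Nat.cast_add_one]
    calc 1 / 5 * (((slopeDiffs (N + 8) ps).length : ℝ) + 1) ^ (2 / 3 : ℝ) ≤ ps.length := by
          linarith
      _ ≤ _ := by exact_mod_cast (Nat.le_succ _).trans hx
end

section
/- There exists an absolute constant C > 0 such that if A ⊂ ℝ is a finite convex set and B ⊆ A is a nonempty subset with |B + B| ≤ 100·|B|, then |B| ≤ C·|A|^{2/3}. -/
open scoped Pointwise

section bridge
variable (S : Finset ℝ)

private lemma sort_getD_mono {p q : ℕ} (hpq : p < q) (hq : q < S.card) :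
    (S.sort (· ≤ ·)).getD p 0 < (S.sort (· ≤ ·)).getD q 0 := by
  have hlen : (S.sort (· ≤ ·)).length = S.card := Finset.length_sort _
  have hs := (Finset.sortedLT_sort S).pairwise
  rw [List.getD_eq_getElem (S.sort (· ≤ ·)) 0 (by omega), List.getD_eq_getElem (S.sort (· ≤ ·)) 0 (by omega)]
  exact List.Pairwise.rel_get_of_lt hs (a := ⟨p, by omega⟩) (b := ⟨q, by omega⟩) (by simpa using hpq)

private lemma sort_getD_mem {p : ℕ} (hp : p < S.card) :
    (S.sort (· ≤ ·)).getD p 0 ∈ S := by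
  have hlen : (S.sort (· ≤ ·)).length = S.card := Finset.length_sort _
  rw [List.getD_eq_getElem (S.sort (· ≤ ·)) 0 (by omega)]
  exact (Finset.mem_sort _).1 (List.getElem_mem _)

private lemma sort_indexOf_getD {x : ℝ} (hx : x ∈ S) :
    List.idxOf x (S.sort (· ≤ ·)) < S.card ∧
      (S.sort (· ≤ ·)).getD (List.idxOf x (S.sort (· ≤ ·))) 0 = x := by
  have hlen : (S.sort (· ≤ ·)).length = S.card := Finset.length_sort _
  have hmem : x ∈ S.sort (· ≤ ·) := (Finset.mem_sort _).2 hx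
  have hlt : List.idxOf x (S.sort (· ≤ ·)) < (S.sort (· ≤ ·)).length :=
    List.idxOf_lt_length_iff.2 hmem
  refine ⟨by omega, ?_⟩
  rw [List.getD_eq_getElem (S.sort (· ≤ ·)) 0 hlt]
  exact List.getElem_idxOf hlt
end bridge

section core
variable {N : ℕ} {a : ℕ → ℝ}

/-- gap function -/
private def dgap (a : ℕ → ℝ) (p : ℕ) : ℝ := a (p+1) - a p

private lemma dgap_lt_dgap (hconv : ∀ p, p + 2 < N → a (p+1) - a p < a (p+2) - a (p+1))
    {p q : ℕ} (hpq : p < q) (hq : q + 1 < N) : dgap a p < dgap a q := by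
  induction q with
  | zero => omega
  | succ r ih =>
    have hr : dgap a r < dgap a (r+1) := hconv r (by omega)
    rcases Nat.lt_succ_iff_lt_or_eq.1 hpq with h | h
    · exact (ih h (by omega)).trans hr
    · subst h; exact hr

private lemma dgap_le_dgap (hconv : ∀ p, p + 2 < N → a (p+1) - a p < a (p+2) - a (p+1))
    {p q : ℕ} (hpq : p ≤ q) (hq : q + 1 < N) : dgap a p ≤ dgap a q := by
  rcases eq_or_lt_of_le hpq with h | h
  · subst h; exact le_refl _
  · exact (dgap_lt_dgap hconv h hq).le

private lemma dgap_pos (hmono : ∀ p q, p < q → q < N → a p < a q)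
    {p : ℕ} (hp : p + 1 < N) : 0 < dgap a p :=
  sub_pos.2 (hmono p (p+1) (by omega) hp)

/-- lower bound : k * d p ≤ a (p+k) - a p -/
private lemma le_sum_gaps (hconv : ∀ p, p + 2 < N → a (p+1) - a p < a (p+2) - a (p+1))
    {p k : ℕ} (hk : 1 ≤ k) (h : p + k < N) :
    (k : ℝ) * dgap a p ≤ a (p + k) - a p := by
  induction k with
  | zero => omega
  | succ r ih =>
    rcases Nat.eq_or_lt_of_le hk with h1 | h1
    · simp [← h1, dgap]
    · have hr : 1 ≤ r := by omega
      have hle : dgap a p ≤ dgap a (p + r) := dgap_le_dgap hconv (by omega) (by omega)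
      have := ih hr (by omega)
      have harr : a (p + (r+1)) - a (p + r) = dgap a (p + r) := by
        rw [show p + (r+1) = (p+r) + 1 by ring]; rfl
      push_cast
      nlinarith
/-- upper bound : a (p+k) - a p ≤ k * d (p+k-1) -/
private lemma sum_gaps_le (hconv : ∀ p, p + 2 < N → a (p+1) - a p < a (p+2) - a (p+1))
    {p k : ℕ} (hk : 1 ≤ k) (h : p + k < N) :
    a (p + k) - a p ≤ (k : ℝ) * dgap a (p + k - 1) := by
  induction k with
  | zero => omega
  | succ r ih =>
    rcases Nat.eq_or_lt_of_le hk with h1 | h1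
    · simp [← h1, dgap]
    · have hr : 1 ≤ r := by omega
      have hle : dgap a (p + r - 1) ≤ dgap a (p + (r+1) - 1) := by
        apply dgap_le_dgap hconv (by omega) (by omega)
      have := ih hr (by omega)
      have harr : a (p + (r+1)) - a (p + r) = dgap a (p + (r+1) - 1) := by
        rw [show p + (r+1) = (p + (r+1) - 1) + 1 by omega]
        rfl
      push_cast
      nlinarith
end core

section width
variable {N m : ℕ} {a : ℕ → ℝ} {σ : ℕ → ℕ}

private lemma width_lt_width
    (hconv : ∀ p, p + 2 < N → a (p+1) - a p < a (p+2) - a (p+1))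
    (hmono : ∀ p q, p < q → q < N → a p < a q)
    (hσ : ∀ j j', j < j' → j' < m → σ j < σ j')
    (hσN : ∀ j, j < m → σ j < N)
    {i j : ℕ} (hij : i < j) (hj : j + 1 < m)
    (heq : a (σ (i+1)) - a (σ i) = a (σ (j+1)) - a (σ j)) :
    σ (j+1) - σ j < σ (i+1) - σ i := by
  have hii : σ i < σ (i+1) := hσ i (i+1) (by omega) (by omega)
  have hjj : σ j < σ (j+1) := hσ j (j+1) (by omega) (by omega)
  have hij' : σ (i+1) ≤ σ j := by
    rcases Nat.eq_or_lt_of_le (show i + 1 ≤ j by omega) with h | h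
    · rw [h]
    · exact (hσ (i+1) j h (by omega)).le
  have hjN : σ (j+1) < N := hσN (j+1) hj
  set wi := σ (i+1) - σ i with hwi
  set wj := σ (j+1) - σ j with hwj
  have hwi1 : 1 ≤ wi := by omega
  have hwj1 : 1 ≤ wj := by omega
  have hilow : (wj : ℝ) * dgap a (σ j) ≤ a (σ (j+1)) - a (σ j) := by
    have := le_sum_gaps (N := N) hconv hwj1 (show σ j + wj < N by omega)
    rwa [show σ j + wj = σ (j+1) by omega] at this
  have hiup : a (σ (i+1)) - a (σ i) ≤ (wi : ℝ) * dgap a (σ (i+1) - 1) := by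
    have h2 := sum_gaps_le (N := N) hconv hwi1 (show σ i + wi < N by omega)
    rwa [show σ i + wi = σ (i+1) by omega] at h2
  have hdlt : dgap a (σ (i+1) - 1) < dgap a (σ j) := by
    apply dgap_lt_dgap (N := N) hconv (by omega) (by omega)
  have hdpos : 0 < dgap a (σ j) := dgap_pos (N := N) hmono (by omega)
  have : (wj : ℝ) * dgap a (σ j) < (wi : ℝ) * dgap a (σ j) := by
    calc (wj : ℝ) * dgap a (σ j) ≤ a (σ (j+1)) - a (σ j) := hilow
    _ = a (σ (i+1)) - a (σ i) := heq.symm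
    _ ≤ (wi : ℝ) * dgap a (σ (i+1) - 1) := hiup
    _ < (wi : ℝ) * dgap a (σ j) := by
        apply mul_lt_mul_of_pos_left hdlt
        exact_mod_cast hwi1
  have := lt_of_mul_lt_mul_right (by linarith : (wj:ℝ) * dgap a (σ j) < (wi:ℝ) * dgap a (σ j)) hdpos.le
  exact_mod_cast this
end width

private lemma sum_distinct_pos (s : Finset ℕ) (h0 : 0 ∉ s) :
    s.card * (s.card + 1) ≤ 2 * ∑ x ∈ s, x := by
  induction s using Finset.strongInductionOn with
  | _ s ih =>
    rcases s.eq_empty_or_nonempty with rfl | hs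
    · simp
    · have hMmem := s.max'_mem hs
      set M := s.max' hs with hM
      have hsub : s ⊆ Finset.Icc 1 M := by
        intro x hx
        simp only [Finset.mem_Icc]
        exact ⟨Nat.one_le_iff_ne_zero.2 (fun h => h0 (h ▸ hx)), s.le_max' x hx⟩
      have hcard : s.card ≤ M := by
        simpa using Finset.card_le_card hsub
      have hih := ih (s.erase M) (Finset.erase_ssubset hMmem) (fun h => h0 (Finset.mem_of_mem_erase h))
      have hsum : ∑ x ∈ s.erase M, x + M = ∑ x ∈ s, x := Finset.sum_erase_add s _ hMmem
      have hcard' : (s.erase M).card = s.card - 1 := Finset.card_erase_of_mem hMmem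
      obtain ⟨c, hc⟩ : ∃ c, s.card = c + 1 := ⟨s.card - 1, by
        have := Finset.card_pos.2 hs; omega⟩
      rw [hcard', hc] at hih
      simp only [Nat.add_sub_cancel] at hih
      rw [hc]
      nlinarith [hih, hcard, hsum, hc]

private lemma tele_sum {m : ℕ} (σ : ℕ → ℕ) (hmono : ∀ j, j + 1 < m → σ j ≤ σ (j+1))
    {M : ℕ} (hM : M < m) : ∑ j ∈ Finset.range M, (σ (j+1) - σ j) ≤ σ M := by
  induction M with
  | zero => simp
  | succ r ih =>
    rw [Finset.sum_range_succ]
    have h1 : σ r ≤ σ (r+1) := hmono r hM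
    have := ih (by omega)
    omega

private lemma cs_bound (N K : ℕ) (VK V : Finset ℝ) (tm : ℝ → ℕ) (c : ℕ)
    (hVK : VK.card ≤ K) (hsqsum : ∑ v ∈ V, tm v * (tm v + 1) ≤ 2 * N)
    (hsub : VK ⊆ V) (hc_eq : c = ∑ v ∈ VK, tm v) : c^2 ≤ 2*N*K := by
  have hcs := sq_sum_le_card_mul_sum_sq (s := VK) (f := fun v => (tm v : ℝ))
  have h1 : ∑ v ∈ VK, (tm v : ℝ)^2 ≤ (2*N : ℝ) := by
    have e2 : ∑ v ∈ VK, (tm v : ℝ)^2 ≤ ∑ v ∈ V, ((tm v : ℝ)^2 + tm v) := by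
      calc ∑ v ∈ VK, (tm v : ℝ)^2 ≤ ∑ v ∈ VK, ((tm v : ℝ)^2 + tm v) := by
            apply Finset.sum_le_sum; intro v _
            exact le_add_of_nonneg_right (by positivity)
      _ ≤ ∑ v ∈ V, ((tm v : ℝ)^2 + tm v) := by
            apply Finset.sum_le_sum_of_subset_of_nonneg hsub
            intro v _ _; positivity
    have e3 : ∑ v ∈ V, ((tm v : ℝ)^2 + tm v) = ((∑ v ∈ V, tm v * (tm v + 1) : ℕ) : ℝ) := by
      push_cast
      apply Finset.sum_congr rfl
      intro v _; ring
    rw [e3] at e2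
    refine e2.trans ?_
    exact_mod_cast hsqsum
  have h2 : (c:ℝ)^2 ≤ (2*N*K : ℝ) := by
    rw [hc_eq]
    push_cast
    calc (∑ v ∈ VK, (tm v:ℝ))^2 ≤ (VK.card : ℝ) * ∑ v ∈ VK, (tm v : ℝ)^2 := hcs
    _ ≤ (K : ℝ) * (2*N : ℝ) := by
        apply mul_le_mul (by exact_mod_cast hVK) h1 (by positivity) (by positivity)
    _ = (2*N*K : ℝ) := by ring
  exact_mod_cast h2

open Finset in
open scoped Pointwise in
private lemma count_lemma {N m : ℕ} {a : ℕ → ℝ} {σ : ℕ → ℕ} {B : Finset ℝ}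
    (hconv : ∀ p, p + 2 < N → a (p+1) - a p < a (p+2) - a (p+1))
    (hmono : ∀ p q, p < q → q < N → a p < a q)
    (hσ : ∀ j j', j < j' → j' < m → σ j < σ j')
    (hσN : ∀ j, j < m → σ j < N)
    (hβB : ∀ j, j < m → a (σ j) ∈ B)
    (hm : 2 ≤ m) (K : ℕ) :
    ∃ c : ℕ, c^2 ≤ 2*N*K ∧ (K+1) * ((m-1) - c) ≤ (B + B - B).card := by
  classical
  set M := m - 1 with hMdef
  set J := Finset.range M with hJdef
  set δ : ℕ → ℝ := fun j => a (σ (j+1)) - a (σ j) with hδdef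
  set w : ℕ → ℕ := fun j => σ (j+1) - σ j with hwdef
  set V : Finset ℝ := J.image δ with hVdef
  set rk : ℝ → ℕ := fun v => (V.filter (· ≤ v)).card with hrkdef
  set tm : ℝ → ℕ := fun v => (J.filter (fun j => δ j = v)).card with htmdef
  -- widths bound per fiber
  have hwidth : ∀ v ∈ V, tm v * (tm v + 1) ≤ 2 * ∑ j ∈ J.filter (fun j => δ j = v), w j := by
    intro v hv
    have hinj : Set.InjOn w (J.filter (fun j => δ j = v)) := by
      intro i hi j hj hww
      simp only [Finset.coe_filter, Set.mem_setOf_eq, hJdef, Finset.mem_range] at hi hj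
      simp only [hwdef] at hww
      by_contra hne
      rcases Nat.lt_or_ge i j with h | h
      · have hlt := width_lt_width (N := N) (m := m) hconv hmono hσ hσN h (by omega)
          (by simp only [hδdef] at hi hj; rw [hi.2, hj.2])
        omega
      · have hji : j < i := by omega
        have hlt := width_lt_width (N := N) (m := m) hconv hmono hσ hσN hji (by omega)
          (by simp only [hδdef] at hi hj; rw [hi.2, hj.2])
        omega
    have h0 : 0 ∉ (J.filter (fun j => δ j = v)).image w := by
      simp only [Finset.mem_image, Finset.mem_filter, hJdef, Finset.mem_range]
      rintro ⟨j, ⟨hj, -⟩, hw0⟩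
      have := hσ j (j+1) (by omega) (by omega)
      simp only [hwdef] at hw0
      omega
    have hcard : ((J.filter (fun j => δ j = v)).image w).card = tm v :=
      Finset.card_image_of_injOn hinj
    have hsum : ∑ x ∈ (J.filter (fun j => δ j = v)).image w, x
        = ∑ j ∈ J.filter (fun j => δ j = v), w j :=
      Finset.sum_image fun i hi j hj h => hinj hi hj h
    have := sum_distinct_pos ((J.filter (fun j => δ j = v)).image w) h0
    rw [hcard, hsum] at this
    exact this
  -- total width
  have htot : ∑ j ∈ J, w j ≤ N := by
    have h1 : ∑ j ∈ Finset.range M, (σ (j+1) - σ j) ≤ σ M :=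
      tele_sum σ (fun j hj => (hσ j (j+1) (by omega) hj).le) (by omega)
    have h2 : σ M < N := hσN M (by omega)
    calc ∑ j ∈ J, w j = ∑ j ∈ Finset.range M, (σ (j+1) - σ j) := rfl
    _ ≤ σ M := h1
    _ ≤ N := by omega
  -- fiberwise sum of widths
  have hfib : ∑ v ∈ V, ∑ j ∈ J.filter (fun j => δ j = v), w j = ∑ j ∈ J, w j :=
    Finset.sum_fiberwise_of_maps_to (fun j hj => Finset.mem_image_of_mem δ hj) w
  have hsqsum : ∑ v ∈ V, tm v * (tm v + 1) ≤ 2 * N := by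
    calc ∑ v ∈ V, tm v * (tm v + 1) ≤ ∑ v ∈ V, 2 * ∑ j ∈ J.filter (fun j => δ j = v), w j :=
          Finset.sum_le_sum hwidth
    _ = 2 * ∑ v ∈ V, ∑ j ∈ J.filter (fun j => δ j = v), w j := by rw [Finset.mul_sum]
    _ = 2 * ∑ j ∈ J, w j := by rw [hfib]
    _ ≤ 2 * N := by omega
  -- number of gaps
  have hVsum : ∑ v ∈ V, tm v = M := by
    have h := Finset.card_eq_sum_card_fiberwise (f := δ) (s := J) (t := V)
      (fun j hj => Finset.mem_image_of_mem δ hj)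
    simp only [hJdef, Finset.card_range] at h
    exact h.symm
  set VK := V.filter (fun v => rk v ≤ K) with hVKdef
  have hrk1 : ∀ v ∈ V, 1 ≤ rk v := fun v hv =>
    Finset.card_pos.2 ⟨v, Finset.mem_filter.2 ⟨hv, le_refl v⟩⟩
  have hrkmono : ∀ v ∈ V, ∀ v' ∈ V, v < v' → rk v < rk v' := by
    intro v hv v' hv' hlt
    apply Finset.card_lt_card
    rw [Finset.ssubset_iff_of_subset]
    · exact ⟨v', Finset.mem_filter.2 ⟨hv', le_refl _⟩, by
        simp only [Finset.mem_filter]; rintro ⟨-, h⟩; exact absurd h (not_le.2 hlt)⟩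
    · intro x hx
      simp only [Finset.mem_filter] at hx ⊢
      exact ⟨hx.1, hx.2.trans hlt.le⟩
  have hVK : VK.card ≤ K := by
    have hmaps : ∀ v ∈ VK, rk v ∈ Finset.Icc 1 K := by
      intro v hv
      simp only [hVKdef, Finset.mem_filter] at hv
      exact Finset.mem_Icc.2 ⟨hrk1 v hv.1, hv.2⟩
    have hinj : Set.InjOn rk VK := by
      intro v hv v' hv' heq
      simp only [Finset.coe_filter, Set.mem_setOf_eq, hVKdef] at hv hv'
      by_contra hne
      rcases lt_or_gt_of_ne hne with h | h
      · exact absurd heq (Nat.ne_of_lt (hrkmono v hv.1 v' hv'.1 h))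
      · exact absurd heq.symm (Nat.ne_of_lt (hrkmono v' hv'.1 v hv.1 h))
    have := Finset.card_le_card_of_injOn rk hmaps hinj
    simpa using this
  set c := (J.filter (fun j => rk (δ j) ≤ K)).card with hcdef
  have hc_eq : c = ∑ v ∈ VK, tm v := by
    have h := Finset.card_eq_sum_card_fiberwise (f := δ)
      (s := J.filter (fun j => rk (δ j) ≤ K)) (t := VK)
      (fun j hj => by
        simp only [Finset.mem_coe, Finset.mem_filter] at hj
        exact Finset.mem_filter.2 ⟨Finset.mem_image_of_mem δ hj.1, hj.2⟩)
    rw [hcdef, h]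
    apply Finset.sum_congr rfl
    intro v hv
    simp only [hVKdef, Finset.mem_filter] at hv
    congr 1
    ext j
    simp only [Finset.mem_filter]
    constructor
    · rintro ⟨⟨hj, -⟩, hδj⟩; exact ⟨hj, hδj⟩
    · rintro ⟨hj, hδj⟩; exact ⟨⟨hj, by rw [hδj]; exact hv.2⟩, hδj⟩
  have hCS : c^2 ≤ 2*N*K := cs_bound N K VK V tm c hVK hsqsum (Finset.filter_subset _ _) hc_eq
  -- positivity and monotonicity of gaps
  have hδpos : ∀ i, i < M → 0 < δ i := by
    intro i hi
    have h1 : σ i < σ (i+1) := hσ i (i+1) (by omega) (by omega)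
    have h2 : σ (i+1) < N := hσN (i+1) (by omega)
    exact sub_pos.2 (hmono _ _ h1 h2)
  have hβmono : ∀ j j', j ≤ j' → j' < m → a (σ j) ≤ a (σ j') := by
    intro j j' hle hlt
    rcases Nat.eq_or_lt_of_le hle with h | h
    · rw [h]
    · exact (hmono _ _ (hσ j j' h hlt) (hσN j' hlt)).le
  -- the squeezed set
  set X := J.biUnion (fun j => (V.filter (· ≤ δ j)).image (fun v => (j, v))) with hXdef
  have hXcard : X.card = ∑ j ∈ J, rk (δ j) := by
    rw [hXdef, Finset.card_biUnion]
    · apply Finset.sum_congr rfl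
      intro j _
      exact Finset.card_image_of_injective _ (Prod.mk_right_injective j)
    · intro j _ j' _ hne
      simp only [Finset.disjoint_left, Finset.mem_image]
      rintro p ⟨v, -, rfl⟩ ⟨v', -, h⟩
      exact hne (congrArg Prod.fst h).symm
  have hXle : X.card ≤ (B + B - B).card := by
    apply Finset.card_le_card_of_injOn (fun p => a (σ p.1) + p.2)
    · intro p hp
      simp only [hXdef, Finset.mem_coe, Finset.mem_biUnion, Finset.mem_image, Finset.mem_filter] at hp
      obtain ⟨j, hjJ, v, ⟨hvV, hvle⟩, rfl⟩ := hp
      simp only [hVdef, Finset.mem_image, hJdef, Finset.mem_range] at hvV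
      obtain ⟨i, hiM, rfl⟩ := hvV
      simp only [hJdef, Finset.mem_range] at hjJ
      have : a (σ j) + δ i = (a (σ j) + a (σ (i+1))) - a (σ i) := by
        simp only [hδdef]; ring
      show a (σ j) + δ i ∈ B + B - B
      rw [this]
      exact Finset.sub_mem_sub
        (Finset.add_mem_add (hβB j (by omega)) (hβB (i+1) (by omega))) (hβB i (by omega))
    · intro p hp q hq heq
      simp only [hXdef, Finset.coe_biUnion, Set.mem_iUnion, Finset.mem_coe,
        Finset.mem_image, Finset.mem_filter] at hp hq
      obtain ⟨j, hjJ, v, ⟨hvV, hvle⟩, rfl⟩ := hp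
      obtain ⟨j', hjJ', v', ⟨hvV', hvle'⟩, rfl⟩ := hq
      simp only [hJdef, Finset.mem_coe, Finset.mem_range] at hjJ hjJ'
      have hvpos : 0 < v := by
        simp only [hVdef, Finset.mem_image, hJdef, Finset.mem_range] at hvV
        obtain ⟨i, hiM, rfl⟩ := hvV
        exact hδpos i hiM
      have hvpos' : 0 < v' := by
        simp only [hVdef, Finset.mem_image, hJdef, Finset.mem_range] at hvV'
        obtain ⟨i, hiM, rfl⟩ := hvV'
        exact hδpos i hiM
      simp only at heq
      have hjj : j = j' := by
        by_contra hne
        rcases Nat.lt_or_ge j j' with h | h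
        · have h1 : a (σ j) + v ≤ a (σ (j+1)) := by
            have := hvle; simp only [hδdef] at this; linarith
          have h2 : a (σ (j+1)) ≤ a (σ j') := hβmono (j+1) j' (by omega) (by omega)
          linarith
        · have hlt : j' < j := by omega
          have h1 : a (σ j') + v' ≤ a (σ (j'+1)) := by
            have := hvle'; simp only [hδdef] at this; linarith
          have h2 : a (σ (j'+1)) ≤ a (σ j) := hβmono (j'+1) j (by omega) (by omega)
          linarith
      subst hjj
      have : v = v' := by linarith
      rw [this]
  have hranklb : (K+1) * (M - c) ≤ ∑ j ∈ J, rk (δ j) := by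
    have hsplit : c + (J.filter (fun j => ¬ (rk (δ j) ≤ K))).card = M := by
      rw [hcdef]
      rw [Finset.card_filter_add_card_filter_not]
      simp [hJdef]
    calc (K+1) * (M - c) ≤ ∑ j ∈ J.filter (fun j => ¬ (rk (δ j) ≤ K)), (K+1) := by
          rw [Finset.sum_const, smul_eq_mul]
          have : M - c = (J.filter (fun j => ¬ (rk (δ j) ≤ K))).card := by omega
          rw [this, mul_comm]
    _ ≤ ∑ j ∈ J.filter (fun j => ¬ (rk (δ j) ≤ K)), rk (δ j) := by
          apply Finset.sum_le_sum
          intro j hj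
          simp only [Finset.mem_filter, not_le] at hj
          omega
    _ ≤ ∑ j ∈ J, rk (δ j) := Finset.sum_le_sum_of_subset (Finset.filter_subset _ _)
  exact ⟨c, hCS, hranklb.trans (hXcard ▸ hXle)⟩

private lemma arith_endgame {M N P : ℕ} (hN : 1 ≤ N)
    (h : ∀ K : ℕ, ∃ c : ℕ, c^2 ≤ 2*N*K ∧ (K+1) * (M - c) ≤ P) :
    3 * M^3 ≤ 128 * N * P := by
  obtain ⟨c, hc, hP⟩ := h (M^2 / (32*N))
  set K := M^2 / (32*N) with hK
  have h1 : 32*N*K ≤ M^2 := by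
    rw [hK, mul_comm (32*N) _]
    exact Nat.div_mul_le_self _ _
  have h2 : (4*c)^2 ≤ M^2 := by nlinarith
  have h3 : 4*c ≤ M := by
    by_contra hlt
    push_neg at hlt
    have := Nat.pow_lt_pow_left hlt (n := 2) (by norm_num)
    omega
  have h4 : 3*M ≤ 4*(M - c) := by omega
  have h5 : M^2 < 32*N*(K+1) := by
    have hd := Nat.div_add_mod (M^2) (32*N)
    have hm := Nat.mod_lt (M^2) (show 0 < 32*N by omega)
    have e1 : 32*N*K + M^2 % (32*N) = M^2 := by rw [hK]; exact hd
    have e2 : 32*N*(K+1) = 32*N*K + 32*N := by ring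
    omega
  calc 3*M^3 = (3*M) * M^2 := by ring
  _ ≤ (4*(M-c)) * (32*N*(K+1)) := Nat.mul_le_mul h4 h5.le
  _ = 128*N*((K+1)*(M-c)) := by ring
  _ ≤ 128*N*P := Nat.mul_le_mul_left _ hP

open scoped Pointwise in
private lemma plun_bound (B : Finset ℝ) (hB : B.Nonempty) (h : (B+B).card ≤ 100 * B.card) :
    ((B + B - B).card : ℕ) ≤ 1000000 * B.card := by
  have h2 : B + B - B = 2 • B - 1 • B := by
    rw [one_nsmul]; congr 1; rw [two_nsmul]
  have key := Finset.pluennecke_ruzsa_inequality_nsmul_sub_nsmul_add hB B 2 1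
  rw [← h2] at key
  have hB0 : (0:ℚ≥0) < B.card := by exact_mod_cast Finset.card_pos.2 hB
  have hd : ((B+B).card / B.card : ℚ≥0) ≤ 100 := by
    rw [div_le_iff₀ hB0]
    exact_mod_cast h
  have h3 : ((B + B - B).card : ℚ≥0) ≤ 100 ^ (2+1) * B.card :=
    key.trans (mul_le_mul_left (pow_le_pow_left' hd _) _)
  norm_num at h3
  exact_mod_cast h3

private lemma final_real {m N : ℕ} (hN : 1 ≤ N) (h : m^2 ≤ 400000000 * N) :
    (m : ℝ) ≤ 20000 * (N:ℝ) ^ (2/3 : ℝ) := by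
  have hN0 : (0:ℝ) ≤ N := Nat.cast_nonneg N
  have hN1 : (1:ℝ) ≤ N := by exact_mod_cast hN
  have hx : (0:ℝ) ≤ (N:ℝ) ^ (2/3 : ℝ) := Real.rpow_nonneg hN0 _
  have key : (N:ℝ) ≤ ((N:ℝ) ^ (2/3:ℝ))^2 := by
    rw [← Real.rpow_natCast ((N:ℝ)^(2/3:ℝ)) 2, ← Real.rpow_mul hN0]
    rw [show ((2/3:ℝ) * ((2:ℕ):ℝ)) = (4/3:ℝ) by push_cast; norm_num]
    calc (N:ℝ) = (N:ℝ)^(1:ℝ) := (Real.rpow_one _).symm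
    _ ≤ (N:ℝ)^(4/3:ℝ) := Real.rpow_le_rpow_of_exponent_le hN1 (by norm_num)
  apply le_of_pow_le_pow_left₀ (n:=2) two_ne_zero (by positivity)
  calc (m:ℝ)^2 ≤ 400000000 * N := by exact_mod_cast h
  _ ≤ 400000000 * ((N:ℝ)^(2/3:ℝ))^2 := by nlinarith [key]
  _ = (20000 * (N:ℝ)^(2/3:ℝ))^2 := by ring

/-- If `A ⊆ ℝ` is convex and `B ⊆ A` is nonempty with `|B + B| ≤ 100|B|`, then
`|B| ≤ C·|A|^{2/3}`. -/
theorem small_doubling_subset_of_convex_set :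
    ∃ C : ℝ, 0 < C ∧ ∀ A : Finset ℝ, IsConvexSet A →
      ∀ B ⊆ A, B.Nonempty → (B + B).card ≤ 100 * B.card →
        (B.card : ℝ) ≤ C * (A.card : ℝ) ^ (2 / 3 : ℝ) := by
  classical
  refine ⟨20000, by norm_num, ?_⟩
  intro A hA B hBA hBne hBsmall
  have hN1 : 1 ≤ A.card :=
    Finset.card_pos.2 ⟨hBne.choose, hBA hBne.choose_spec⟩
  have key : B.card ^ 2 ≤ 400000000 * A.card := by
    set N := A.card with hNdef
    set m := B.card with hmdef
    have hm1 : 1 ≤ m := Finset.card_pos.2 hBne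
    rcases Nat.lt_or_ge m 2 with hm | hm
    · have hmeq : m = 1 := by omega
      rw [hmeq]
      nlinarith [hN1]
    · set a : ℕ → ℝ := fun p => (A.sort (· ≤ ·)).getD p 0 with hadef
      set b : ℕ → ℝ := fun j => (B.sort (· ≤ ·)).getD j 0 with hbdef
      set σ : ℕ → ℕ := fun j => List.idxOf (b j) (A.sort (· ≤ ·)) with hσdef
      have hconv : ∀ p, p + 2 < N → a (p+1) - a p < a (p+2) - a (p+1) := fun p hp => hA p hp
      have hamono : ∀ p q, p < q → q < N → a p < a q := fun p q h1 h2 => sort_getD_mono A h1 h2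
      have hbmono : ∀ j j', j < j' → j' < m → b j < b j' := fun j j' h1 h2 => sort_getD_mono B h1 h2
      have hbB : ∀ j, j < m → b j ∈ B := fun j hj => sort_getD_mem B hj
      have hσprop : ∀ j, j < m → σ j < N ∧ a (σ j) = b j := fun j hj =>
        sort_indexOf_getD A (hBA (hbB j hj))
      have hσN : ∀ j, j < m → σ j < N := fun j hj => (hσprop j hj).1
      have hσmono : ∀ j j', j < j' → j' < m → σ j < σ j' := by
        intro j j' h1 h2
        have hb := hbmono j j' h1 h2
        have e1 := (hσprop j (by omega)).2
        have e2 := (hσprop j' h2).2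
        by_contra hle
        push_neg at hle
        rcases Nat.eq_or_lt_of_le hle with h | h
        · rw [← h, e2] at e1; linarith
        · have := hamono (σ j') (σ j) h (hσN j (by omega))
          rw [e1, e2] at this; linarith
      have hβB : ∀ j, j < m → a (σ j) ∈ B := fun j hj => (hσprop j hj).2 ▸ hbB j hj
      have hcount : ∀ K : ℕ, ∃ c : ℕ, c^2 ≤ 2*N*K ∧ (K+1) * ((m-1) - c) ≤ (B + B - B).card :=
        fun K => count_lemma hconv hamono hσmono hσN hβB hm K
      have harith : 3 * (m-1)^3 ≤ 128 * N * (B + B - B).card :=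
        arith_endgame hN1 hcount
      have hplun : (B + B - B).card ≤ 1000000 * m := plun_bound B hBne hBsmall
      set M := m - 1 with hMdef
      have hMm : m = M + 1 := by omega
      have hM1 : 1 ≤ M := by omega
      have h3 : 3*M^3 ≤ 128*N*(1000000*m) :=
        harith.trans (Nat.mul_le_mul_left _ hplun)
      have h4 : 3*M^3 ≤ (256000000*N)*M := by
        calc 3*M^3 ≤ 128*N*(1000000*m) := h3
        _ ≤ 128*N*(1000000*(2*M)) := Nat.mul_le_mul_left _ (Nat.mul_le_mul_left _ (by omega))
        _ = (256000000*N)*M := by ring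
      have h5 : 3*M^2 ≤ 256000000*N := by
        have hmul : (3*M^2)*M ≤ (256000000*N)*M := by
          calc (3*M^2)*M = 3*M^3 := by ring
          _ ≤ (256000000*N)*M := h4
        exact Nat.le_of_mul_le_mul_right hmul (by omega)
      nlinarith [h5, hM1, hMm]
  exact final_real hN1 key
end
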